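/- arXiv:2112.09364 — 5 statements merged into one kernel-verified Lean document; each statement's English description precedes it below -/
import Mathlib

section
/- Let j : ℝ^N → [0,∞] be measurable and even with ∫_{ℝ^N} min{1,|z|²} j(z) dz < ∞, ∫_{ℝ^N} j(z) dz = ∞, and ∫_{B_R(0)∖B_r(0)} j(z)² dz < ∞ for all 0 < r < R. Let Ω ⊂ ℝ^N be a bounded open set, let λ > 0, and let u ∈ 𝒟^j(Ω) satisfy b_j(u,v) = λ ∫_Ω u(x)v(x) dx for all v ∈ 𝒟^j(Ω) (i.e. u is a Dirichlet eigenfunction of the operator I_j in Ω with eigenvalue λ). Then u ∈ L^∞(Ω) and there is a constant C = C(Ω, j, λ) > 0 such that ‖u‖_{L^∞(Ω)} ≤ C ‖u‖_{L²(Ω)}. -/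
open MeasureTheory ENNReal Metric Set Filter

noncomputable section

abbrev Euc (N : ℕ) := EuclideanSpace ℝ (Fin N)

/-- A kernel of order `σ`. -/
def IsKernel (N : ℕ) (σ : ℝ) (k : Euc N → Euc N → ℝ) : Prop :=
  Measurable (fun p : Euc N × Euc N => k p.1 p.2) ∧
  (∀ x y, 0 ≤ k x y) ∧ (∀ x y, k x y = k y x) ∧
  ∃ C : ℝ, ∀ x, (∫⁻ y, ENNReal.ofReal (min 1 (‖x - y‖ ^ σ) * k x y)) ≤ ENNReal.ofReal C

/-- The quadratic form `b_{k,Ω}(u)` (valued in `[0,∞]`). -/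
def quadForm {N : ℕ} (k : Euc N → Euc N → ℝ) (Ω : Set (Euc N)) (u : Euc N → ℝ) : ℝ≥0∞ :=
  (1 / 2) * ∫⁻ x in Ω, ∫⁻ y in Ω, ENNReal.ofReal ((u x - u y) ^ 2 * k x y)

/-- The bilinear form `b_{k,Ω}(u,v)`. -/
def bForm {N : ℕ} (k : Euc N → Euc N → ℝ) (Ω : Set (Euc N)) (u v : Euc N → ℝ) : ℝ :=
  (1 / 2) * ∫ x in Ω, ∫ y in Ω, (u x - u y) * (v x - v y) * k x y

/-- The symmetric lower bound `j` of the kernel `k`. -/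
def symLB {N : ℕ} (k : Euc N → Euc N → ℝ) (z : Euc N) : ℝ :=
  essInf (fun x => min (k x (x + z)) (k x (x - z))) volume

/-- `u|_Ω ∈ D^k(Ω)`. -/
def MemDk {N : ℕ} (k : Euc N → Euc N → ℝ) (Ω : Set (Euc N)) (u : Euc N → ℝ) : Prop :=
  Measurable u ∧ MemLp u 2 (volume.restrict Ω) ∧ quadForm k Ω u < ⊤

/-- `u ∈ 𝒱^k(Ω)`. -/
def MemVk {N : ℕ} (k : Euc N → Euc N → ℝ) (Ω : Set (Euc N)) (u : Euc N → ℝ) : Prop :=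
  MemDk k Ω u ∧
  ∀ r > (0:ℝ), ∃ C : ℝ, ∀ x, (∫⁻ y in (Metric.ball x r)ᶜ, ENNReal.ofReal (|u y| * k x y)) ≤ ENNReal.ofReal C

/-- `u ∈ 𝒱^k_loc(Ω)`. -/
def MemVkLoc {N : ℕ} (k : Euc N → Euc N → ℝ) (Ω : Set (Euc N)) (u : Euc N → ℝ) : Prop :=
  Measurable u ∧
  (∀ Ω' : Set (Euc N), IsOpen Ω' → IsCompact (closure Ω') → closure Ω' ⊆ Ω → MemDk k Ω' u) ∧
  ∀ r > (0:ℝ), ∃ C : ℝ, ∀ x, (∫⁻ y in (Metric.ball x r)ᶜ, ENNReal.ofReal (|u y| * k x y)) ≤ ENNReal.ofReal C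

/-- `u ∈ 𝒟^k(Ω)`. -/
def MemDkZero {N : ℕ} (k : Euc N → Euc N → ℝ) (Ω : Set (Euc N)) (u : Euc N → ℝ) : Prop :=
  Measurable u ∧ MemLp u 2 volume ∧ quadForm k Set.univ u < ⊤ ∧ ∀ᵐ x ∂(volume : Measure (Euc N)), x ∉ Ω → u x = 0

/-- `φ ∈ C_c^∞(Ω)`. -/
def IsTestFun {N : ℕ} (Ω : Set (Euc N)) (φ : Euc N → ℝ) : Prop :=
  ContDiff ℝ (⊤ : ℕ∞) φ ∧ HasCompactSupport φ ∧ tsupport φ ⊆ Ω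

/-- `c ∈ L^∞_loc(Ω)`. -/
def MemLinftyLoc {N : ℕ} (Ω : Set (Euc N)) (c : Euc N → ℝ) : Prop :=
  ∀ K ⊆ Ω, IsCompact K → ∃ M : ℝ, ∀ᵐ x ∂(volume.restrict K), |c x| ≤ M

/-- `κ_{k,Ω}(x)`. -/
def kappa {N : ℕ} (k : Euc N → Euc N → ℝ) (Ω : Set (Euc N)) (x : Euc N) : ℝ≥0∞ :=
  ∫⁻ y in Ωᶜ, ENNReal.ofReal (k x y)

/-- `Ω` has Lipschitz boundary. -/
def HasLipschitzBoundary (N : ℕ) (Ω : Set (Euc N)) : Prop :=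
  ∀ p ∈ frontier Ω, ∃ U ∈ nhds p, ∃ e : Euc N ≃ᵢ Euc N, ∃ γ : Euc N → ℝ, ∃ L : NNReal,
    LipschitzWith L γ ∧
    (∀ x y : Euc N, (∀ i : Fin N, (i : ℕ) + 1 < N → x i = y i) → γ x = γ y) ∧
    Ω ∩ U = {x ∈ U | ∀ i : Fin N, (i : ℕ) + 1 = N → γ (e x) < e x i}

/-- The quadratic form `b_{j,U}(u)` for a translation-invariant kernel `j(x-y)`. -/
def quadJ {N : ℕ} (j : Euc N → ℝ) (U : Set (Euc N)) (u : Euc N → ℝ) : ℝ≥0∞ :=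
  (1 / 2) * ∫⁻ x in U, ∫⁻ y in U, ENNReal.ofReal ((u x - u y) ^ 2 * j (x - y))

/-- The bilinear form `b_j(u,v)` over all of `ℝ^N`. -/
def bJ {N : ℕ} (j : Euc N → ℝ) (u v : Euc N → ℝ) : ℝ :=
  (1 / 2) * ∫ x, ∫ y, (u x - u y) * (v x - v y) * j (x - y)

/-- `u ∈ 𝒟^j(Ω)`. -/
def MemDJZero {N : ℕ} (j : Euc N → ℝ) (Ω : Set (Euc N)) (u : Euc N → ℝ) : Prop :=
  Measurable u ∧ MemLp u 2 volume ∧ quadJ j Set.univ u < ⊤ ∧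
    ∀ᵐ x ∂(volume : Measure (Euc N)), x ∉ Ω → u x = 0

/-!
Split the kernel as `j = (j - m) + m`, where `m` is `j` cut off to an annulus: since `∫ j = ∞`
while a point carries finite mass, the annulus can be taken so large that `M = ∫ m > λ`, and the
local `L²` bound on `j` makes `m ∈ L¹ ∩ L²`. Test the eigenvalue equation with `v = (u - t)⁺`.
The `(j - m)`-part of `b_j(u, v)` is nonnegative because `v` is a monotone function of `u`; the
`m`-part is `M ∫ u v` minus two convolution terms, each bounded by `‖u‖₂ ‖m‖₂ ∫ v` by
Cauchy–Schwarz. Hence `(M - λ) ∫ u v ≤ ‖u‖₂ ‖m‖₂ ∫ v`, and since `∫ u v = ∫ v² + t ∫ v`, the level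
`t = ‖u‖₂ ‖m‖₂ / (M - λ)` forces `v = 0`, i.e. `u ≤ t` a.e. The same applied to `-u` bounds `|u|`.
-/

section Integrals

variable {α : Type*} [MeasurableSpace α] {μ : Measure α}

lemma abs_integral_mul_comp_le {u m : α → ℝ} {τ : α → α} (hτ : MeasurePreserving τ μ μ)
    (hu : MemLp u 2 μ) (hm : MemLp m 2 μ) :
    |∫ x, u x * m (τ x) ∂μ| ≤ (eLpNorm u 2 μ * eLpNorm m 2 μ).toReal := by
  have hmτ : eLpNorm (m ∘ τ) 2 μ = eLpNorm m 2 μ :=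
    eLpNorm_comp_measurePreserving hm.aestronglyMeasurable hτ
  have hholder : ‖∫ x, u x * m (τ x) ∂μ‖ₑ ≤ eLpNorm u 2 μ * eLpNorm m 2 μ := calc
    ‖∫ x, u x * m (τ x) ∂μ‖ₑ ≤ eLpNorm (u • (m ∘ τ)) 1 μ := by
      rw [eLpNorm_one_eq_lintegral_enorm]
      exact enorm_integral_le_lintegral_enorm (fun x => u x * m (τ x))
    _ ≤ eLpNorm u 2 μ * eLpNorm (m ∘ τ) 2 μ :=
      eLpNorm_smul_le_mul_eLpNorm (hm.aestronglyMeasurable.comp_measurePreserving hτ)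
        hu.aestronglyMeasurable
    _ = eLpNorm u 2 μ * eLpNorm m 2 μ := by rw [hmτ]
  rw [← Real.norm_eq_abs, ← toReal_enorm]
  exact ENNReal.toReal_mono (mul_ne_top hu.eLpNorm_ne_top hm.eLpNorm_ne_top) hholder

lemma abs_integral_mul_le_mul_integral {v g : α → ℝ} {K : ℝ} (hv0 : 0 ≤ v) (hv : Integrable v μ)
    (hg : ∀ x, |g x| ≤ K) : |∫ x, v x * g x ∂μ| ≤ K * ∫ x, v x ∂μ := by
  rw [← Real.norm_eq_abs, ← integral_const_mul]
  refine norm_integral_le_of_norm_le (hv.const_mul K) (Eventually.of_forall fun x => ?_)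
  rw [norm_mul, Real.norm_of_nonneg (hv0 x), Real.norm_eq_abs, mul_comm]
  exact mul_le_mul_of_nonneg_right (hg x) (hv0 x)

lemma eLpNorm_restrict_eq_of_ae_notMem_eq_zero [SFinite μ] {f : α → ℝ} {s : Set α} {p : ℝ≥0∞}
    (h : ∀ᵐ x ∂μ, x ∉ s → f x = 0) :
    eLpNorm f p (μ.restrict s) = eLpNorm f p μ := by
  rw [← Measure.restrict_toMeasurable_of_sFinite,
    ← eLpNorm_indicator_eq_eLpNorm_restrict (measurableSet_toMeasurable μ s)]
  refine eLpNorm_congr_ae ?_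
  filter_upwards [h] with x hx
  by_cases hxs : x ∈ toMeasurable μ s
  · simp [hxs]
  · simp [hxs, hx fun h => hxs (subset_toMeasurable μ s h)]

end Integrals

section Convolution

variable {G : Type*} [AddCommGroup G] [MeasurableSpace G] [MeasurableAdd₂ G] [MeasurableNeg G]
  {μ : Measure G} [SFinite μ] [μ.IsAddLeftInvariant]

lemma integrable_mul_comp_sub_fst [μ.IsNegInvariant] {w m : G → ℝ} (hw : Integrable w μ)
    (hm : Integrable m μ) :
    Integrable (fun p : G × G => w p.1 * m (p.1 - p.2)) (μ.prod μ) := by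
  have hmeas : AEStronglyMeasurable (fun p : G × G => w p.1 * m (p.1 - p.2)) (μ.prod μ) :=
    hw.aestronglyMeasurable.comp_fst.mul
      (hm.aestronglyMeasurable.comp_quasiMeasurePreserving
        (quasiMeasurePreserving_sub μ μ))
  refine (integrable_prod_iff hmeas).2 ⟨Eventually.of_forall fun x => ?_, ?_⟩
  · exact (hm.comp_sub_left x).const_mul (w x)
  · simp only [norm_mul, integral_const_mul]
    simpa only [integral_sub_left_eq_self (fun z => ‖m z‖) μ] using hw.norm.mul_const _

lemma integral_mul_comp_sub_fst [μ.IsNegInvariant] {w m : G → ℝ} (hw : Integrable w μ)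
    (hm : Integrable m μ) :
    ∫ p : G × G, w p.1 * m (p.1 - p.2) ∂(μ.prod μ) = (∫ x, w x ∂μ) * ∫ z, m z ∂μ := by
  rw [integral_prod _ (integrable_mul_comp_sub_fst hw hm), ← integral_mul_const]
  simp only [integral_const_mul, integral_sub_left_eq_self m μ]

lemma integrable_mul_comp_sub_snd {w m : G → ℝ} (hw : Integrable w μ) (hm : Integrable m μ) :
    Integrable (fun p : G × G => w p.2 * m (p.1 - p.2)) (μ.prod μ) := by
  have hmeas : AEStronglyMeasurable (fun p : G × G => w p.2 * m (p.1 - p.2)) (μ.prod μ) :=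
    hw.aestronglyMeasurable.comp_snd.mul
      (hm.aestronglyMeasurable.comp_quasiMeasurePreserving
        (quasiMeasurePreserving_sub μ μ))
  refine (integrable_prod_iff' hmeas).2 ⟨Eventually.of_forall fun y => ?_, ?_⟩
  · exact (hm.comp_sub_right y).const_mul (w y)
  · simp only [norm_mul, integral_const_mul]
    simpa only [integral_sub_right_eq_self (fun z => ‖m z‖) _] using hw.norm.mul_const _

lemma integral_mul_comp_sub_snd {w m : G → ℝ} (hw : Integrable w μ) (hm : Integrable m μ) :
    ∫ p : G × G, w p.2 * m (p.1 - p.2) ∂(μ.prod μ) = (∫ x, w x ∂μ) * ∫ z, m z ∂μ := by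
  rw [integral_prod_symm _ (integrable_mul_comp_sub_snd hw hm), ← integral_mul_const]
  simp only [integral_const_mul, integral_sub_right_eq_self m]

lemma integrable_mul_mul_comp_sub [μ.IsNegInvariant] {a b m : G → ℝ} (ha : MemLp a 2 μ)
    (hb : MemLp b 2 μ) (hm : Integrable m μ) :
    Integrable (fun p : G × G => a p.1 * b p.2 * m (p.1 - p.2)) (μ.prod μ) := by
  refine ((integrable_mul_comp_sub_fst ha.integrable_sq hm.abs).add
    (integrable_mul_comp_sub_snd hb.integrable_sq hm.abs)).mono'
    ((ha.aestronglyMeasurable.comp_fst.mul hb.aestronglyMeasurable.comp_snd).mul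
      (hm.aestronglyMeasurable.comp_quasiMeasurePreserving (quasiMeasurePreserving_sub μ μ)))
    (Eventually.of_forall fun p => ?_)
  have hab : |a p.1| * |b p.2| ≤ a p.1 ^ 2 + b p.2 ^ 2 := by
    nlinarith [sq_nonneg (|a p.1| - |b p.2|), sq_abs (a p.1), sq_abs (b p.2)]
  simp only [norm_mul, Real.norm_eq_abs, Pi.add_apply, ← add_mul]
  exact mul_le_mul_of_nonneg_right hab (abs_nonneg _)

variable [μ.IsNegInvariant] {u v m : G → ℝ}

lemma abs_integral_mul_mul_comp_sub_fst_le (hu : MemLp u 2 μ) (hv : MemLp v 2 μ)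
    (hv1 : Integrable v μ) (hv0 : 0 ≤ v) (hm1 : Integrable m μ) (hm : MemLp m 2 μ) :
    |∫ p : G × G, u p.1 * v p.2 * m (p.1 - p.2) ∂(μ.prod μ)| ≤
      (eLpNorm u 2 μ * eLpNorm m 2 μ).toReal * ∫ x, v x ∂μ := by
  rw [integral_prod_symm _ (integrable_mul_mul_comp_sub hu hv hm1)]
  have hfactor : ∀ y, ∫ x, u x * v y * m (x - y) ∂μ = v y * ∫ x, u x * m (x - y) ∂μ := by
    intro y
    rw [← integral_const_mul]
    exact integral_congr_ae (Eventually.of_forall fun x => by ring)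
  simp only [hfactor]
  exact abs_integral_mul_le_mul_integral hv0 hv1 fun y =>
    abs_integral_mul_comp_le (measurePreserving_sub_right μ y) hu hm

lemma abs_integral_mul_mul_comp_sub_snd_le (hu : MemLp u 2 μ) (hv : MemLp v 2 μ)
    (hv1 : Integrable v μ) (hv0 : 0 ≤ v) (hm1 : Integrable m μ) (hm : MemLp m 2 μ) :
    |∫ p : G × G, u p.2 * v p.1 * m (p.1 - p.2) ∂(μ.prod μ)| ≤
      (eLpNorm u 2 μ * eLpNorm m 2 μ).toReal * ∫ x, v x ∂μ := by
  have hint : Integrable (fun p : G × G => u p.2 * v p.1 * m (p.1 - p.2)) (μ.prod μ) :=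
    (integrable_mul_mul_comp_sub hv hu hm1).congr (Eventually.of_forall fun p => by ring)
  rw [integral_prod _ hint]
  have hfactor : ∀ x, ∫ y, u y * v x * m (x - y) ∂μ = v x * ∫ y, u y * m (x - y) ∂μ := by
    intro x
    rw [← integral_const_mul]
    exact integral_congr_ae (Eventually.of_forall fun y => by ring)
  simp only [hfactor]
  exact abs_integral_mul_le_mul_integral hv0 hv1 fun x =>
    abs_integral_mul_comp_le (Measure.measurePreserving_sub_left μ x) hu hm

end Convolution

section Annulus

variable {E : Type*} [NormedAddCommGroup E]

def annulus (n : ℕ) : Set E := ball 0 (n + 2) \ ball 0 (n + 2)⁻¹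

lemma monotone_annulus : Monotone (annulus : ℕ → Set E) := by
  intro a b hab
  have hab' : (a : ℝ) + 2 ≤ b + 2 := by gcongr
  exact sdiff_subset_sdiff (ball_subset_ball hab') (ball_subset_ball (by gcongr))

lemma iUnion_annulus : ⋃ n, (annulus n : Set E) = {0}ᶜ := by
  refine Subset.antisymm (iUnion_subset fun n z hz h0 => hz.2 ?_) fun z hz => ?_
  · rw [h0]; exact mem_ball_self (by positivity)
  · have hpos : 0 < ‖z‖ := norm_pos_iff.2 hz
    obtain ⟨n, hn⟩ := exists_nat_gt (max ‖z‖ ‖z‖⁻¹)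
    refine mem_iUnion.2 ⟨n, ?_, ?_⟩
    · rw [mem_ball_zero_iff]; linarith [le_max_left ‖z‖ ‖z‖⁻¹]
    · rw [mem_ball_zero_iff, not_lt]
      exact inv_le_of_inv_le₀ hpos (by linarith [le_max_right ‖z‖ ‖z‖⁻¹])

variable [MeasurableSpace E] [OpensMeasurableSpace E]

lemma measurableSet_annulus (n : ℕ) : MeasurableSet (annulus n : Set E) :=
  measurableSet_ball.diff measurableSet_ball

lemma iSup_setLIntegral_annulus (μ : Measure E) (f : E → ℝ≥0∞) :
    ⨆ n, ∫⁻ z in annulus n, f z ∂μ = ∫⁻ z in {0}ᶜ, f z ∂μ := by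
  rw [← iUnion_annulus, ← withDensity_apply _ (MeasurableSet.iUnion measurableSet_annulus),
    monotone_annulus.measure_iUnion]
  simp only [withDensity_apply _ (measurableSet_annulus _)]

end Annulus

def energyDensity {G : Type*} [Sub G] (k u v : G → ℝ) (p : G × G) : ℝ :=
  (u p.1 - u p.2) * (v p.1 - v p.2) * k (p.1 - p.2)

section Forms

variable {N : ℕ} {j k u v : Euc N → ℝ}

lemma bJ_eq_integral_energyDensity
    (h : Integrable (energyDensity k u v) (volume.prod volume)) :
    bJ k u v = 1 / 2 * ∫ p, energyDensity k u v p ∂(volume.prod volume) := by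
  rw [bJ, ← integral_integral (f := fun x y => energyDensity k u v (x, y)) h]
  rfl

lemma bJ_add_kernel {k' : Euc N → ℝ} (h : Integrable (energyDensity k u v) (volume.prod volume))
    (h' : Integrable (energyDensity k' u v) (volume.prod volume)) :
    bJ (k + k') u v = bJ k u v + bJ k' u v := by
  have hsum : energyDensity (k + k') u v = energyDensity k u v + energyDensity k' u v := by
    ext p; simp only [energyDensity, Pi.add_apply]; ring
  rw [bJ_eq_integral_energyDensity h, bJ_eq_integral_energyDensity h',
    bJ_eq_integral_energyDensity (hsum ▸ h.add h'), hsum, ← mul_add, ← integral_add h h']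
  rfl

lemma bJ_nonneg (hk : 0 ≤ k) (huv : Monovary u v) : 0 ≤ bJ k u v :=
  mul_nonneg (by norm_num) <| integral_nonneg fun x => integral_nonneg fun y =>
    mul_nonneg (huv.sub_mul_sub_nonneg y x) (hk _)

lemma bJ_neg_left : bJ k (-u) v = -bJ k u v := by
  simp only [bJ, Pi.neg_apply, neg_sub_neg, ← integral_neg, ← mul_neg]
  congr 2 with x
  congr 1 with y
  ring

lemma quadJ_mono_kernel (h : k ≤ j) (U : Set (Euc N)) : quadJ k U u ≤ quadJ j U u := by
  unfold quadJ
  gcongr with x _ y _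
  exact h _

lemma integrable_energyDensity_self (hk : Measurable k) (hk0 : 0 ≤ k) (hu : Measurable u)
    (h : quadJ k univ u < ⊤) : Integrable (energyDensity k u u) (volume.prod volume) := by
  have hmeas : Measurable (energyDensity k u u) := by
    unfold energyDensity; fun_prop
  have hnonneg : 0 ≤ᵐ[volume.prod volume] energyDensity k u u :=
    Eventually.of_forall fun p => mul_nonneg (mul_self_nonneg _) (hk0 _)
  refine ⟨hmeas.aestronglyMeasurable, ?_⟩
  rw [hasFiniteIntegral_iff_ofReal hnonneg, lintegral_prod _ hmeas.ennreal_ofReal.aemeasurable]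
  simp only [quadJ, Measure.restrict_univ] at h
  simpa only [energyDensity, ← sq] using ENNReal.lt_top_of_mul_ne_top_right h.ne (by norm_num)

lemma integrable_energyDensity (hk : Measurable k) (hk0 : 0 ≤ k) (hu : Measurable u)
    (hv : Measurable v) (hqu : quadJ k univ u < ⊤) (hqv : quadJ k univ v < ⊤) :
    Integrable (energyDensity k u v) (volume.prod volume) := by
  refine ((integrable_energyDensity_self hk hk0 hu hqu).add
    (integrable_energyDensity_self hk hk0 hv hqv)).mono'
    (by unfold energyDensity; fun_prop) (Eventually.of_forall fun p => ?_)
  set a := u p.1 - u p.2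
  set b := v p.1 - v p.2
  have hab : |a| * |b| ≤ a * a + b * b := by
    nlinarith [sq_nonneg (|a| - |b|), abs_mul_abs_self a, abs_mul_abs_self b]
  simp only [energyDensity, Pi.add_apply, norm_mul, Real.norm_eq_abs, abs_of_nonneg (hk0 _),
    ← add_mul]
  exact mul_le_mul_of_nonneg_right hab (hk0 _)

lemma MemDJZero.comp_lipschitz {Ω : Set (Euc N)} (hj0 : 0 ≤ j) (hu : MemDJZero j Ω u)
    {φ : ℝ → ℝ} (hφ : LipschitzWith 1 φ) (hφ0 : φ 0 = 0) : MemDJZero j Ω (φ ∘ u) := by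
  obtain ⟨hum, huL2, huq, hu0⟩ := hu
  have hφle : ∀ a b, |φ a - φ b| ≤ |a - b| := fun a b => by
    simpa [Real.dist_eq] using hφ.dist_le_mul a b
  have hφu : Measurable (φ ∘ u) := hφ.continuous.measurable.comp hum
  refine ⟨hφu, huL2.mono hφu.aestronglyMeasurable (Eventually.of_forall fun x => ?_),
    huq.trans_le' ?_, ?_⟩
  · simpa [hφ0] using hφle (u x) 0
  · unfold quadJ
    refine mul_le_mul_right (lintegral_mono fun x => lintegral_mono fun y =>
      ENNReal.ofReal_le_ofReal ?_) _
    exact mul_le_mul_of_nonneg_right (sq_le_sq.2 (hφle _ _)) (hj0 _)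
  · filter_upwards [hu0] with x hx hxΩ
    simp [hx hxΩ, hφ0]

lemma MemDJZero.integrable {Ω : Set (Euc N)} (hu : MemDJZero j Ω u) (hΩ : volume Ω ≠ ⊤) :
    Integrable u volume := by
  have : IsFiniteMeasure (volume.restrict Ω) := isFiniteMeasure_restrict.2 hΩ
  exact IntegrableOn.integrable_of_ae_notMem_eq_zero ((hu.2.1.restrict Ω).integrable one_le_two)
    hu.2.2.2

end Forms

lemma le_bJ_of_integrable_kernel {N : ℕ} {m u v : Euc N → ℝ} (hm1 : Integrable m volume)
    (hm : MemLp m 2 volume) (hu : MemLp u 2 volume) (hv : MemLp v 2 volume)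
    (hv1 : Integrable v volume) (hv0 : 0 ≤ v) :
    (∫ z, m z) * (∫ x, u x * v x) - (eLpNorm u 2 volume * eLpNorm m 2 volume).toReal * ∫ x, v x
      ≤ bJ m u v := by
  have huv : Integrable (fun x => u x * v x) volume := hu.integrable_mul hv
  have hD₁ := integrable_mul_comp_sub_fst huv hm1
  have hD₂ := integrable_mul_comp_sub_snd huv hm1
  have hC₁ := integrable_mul_mul_comp_sub hu hv hm1
  have hC₂ : Integrable (fun p : Euc N × Euc N => u p.2 * v p.1 * m (p.1 - p.2))
      (volume.prod volume) :=
    (integrable_mul_mul_comp_sub hv hu hm1).congr (Eventually.of_forall fun p => by ring)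
  have hsplit : energyDensity m u v = (fun p => u p.1 * v p.1 * m (p.1 - p.2)) +
      (fun p => u p.2 * v p.2 * m (p.1 - p.2)) - (fun p => u p.1 * v p.2 * m (p.1 - p.2)) -
      (fun p => u p.2 * v p.1 * m (p.1 - p.2)) := by
    ext p; simp only [energyDensity, Pi.add_apply, Pi.sub_apply]; ring
  have hbJ : bJ m u v = 1 / 2 * (2 * ((∫ z, m z) * ∫ x, u x * v x)
      - ∫ p : Euc N × Euc N, u p.1 * v p.2 * m (p.1 - p.2) ∂(volume.prod volume)
      - ∫ p : Euc N × Euc N, u p.2 * v p.1 * m (p.1 - p.2) ∂(volume.prod volume)) := by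
    rw [bJ_eq_integral_energyDensity (hsplit ▸ ((hD₁.add hD₂).sub hC₁).sub hC₂), hsplit]
    rw [integral_sub' ((hD₁.add hD₂).sub hC₁) hC₂, integral_sub' (hD₁.add hD₂) hC₁,
      integral_add' hD₁ hD₂, integral_mul_comp_sub_fst huv hm1, integral_mul_comp_sub_snd huv hm1]
    ring
  have h₁ := abs_le.1 (abs_integral_mul_mul_comp_sub_fst_le hu hv hv1 hv0 hm1 hm)
  have h₂ := abs_le.1 (abs_integral_mul_mul_comp_sub_snd_le hu hv hv1 hv0 hm1 hm)
  rw [hbJ]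
  linarith [h₁.2, h₂.2]

lemma exists_integrable_kernel_le {N : ℕ} {j : Euc N → ℝ} (hjm : Measurable j) (hj0 : 0 ≤ j)
    (hjinf : ∫⁻ z, ENNReal.ofReal (j z) = ⊤)
    (hjsq : ∀ r R : ℝ, 0 < r → r < R →
      ∫⁻ z in ball (0 : Euc N) R \ ball 0 r, ENNReal.ofReal (j z ^ 2) < ⊤) (c : ℝ) :
    ∃ m : Euc N → ℝ, Measurable m ∧ 0 ≤ m ∧ m ≤ j ∧ Integrable m volume ∧
      MemLp m 2 volume ∧ c < ∫ z, m z := by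
  have hpunct : ∫⁻ z in {0}ᶜ, ENNReal.ofReal (j z) = ⊤ := by
    have h0 : ∫⁻ z in {0}, ENNReal.ofReal (j z) < ⊤ := by
      rw [lintegral_singleton]
      exact mul_lt_top ofReal_lt_top isCompact_singleton.measure_lt_top
    rw [← lintegral_add_compl _ (measurableSet_singleton 0)] at hjinf
    exact (ENNReal.add_eq_top.1 hjinf).resolve_left h0.ne
  obtain ⟨n, hn⟩ : ∃ n, ENNReal.ofReal c < ∫⁻ z in annulus n, ENNReal.ofReal (j z) := by
    rw [← lt_iSup_iff, iSup_setLIntegral_annulus, hpunct]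
    exact ofReal_lt_top
  have hA := measurableSet_annulus (E := Euc N) n
  have hAfin : volume (annulus n : Set (Euc N)) ≠ ⊤ :=
    (measure_mono sdiff_subset |>.trans_lt measure_ball_lt_top).ne
  have hsq : ∫⁻ z in annulus n, ENNReal.ofReal (j z ^ 2) < ⊤ :=
    hjsq _ _ (by positivity) (by
      have : (1 : ℝ) < n + 2 := by linarith [n.cast_nonneg (α := ℝ)]
      exact (inv_lt_one_of_one_lt₀ this).trans this)
  have hL2 : MemLp j 2 (volume.restrict (annulus n)) :=
    (memLp_two_iff_integrable_sq hjm.aestronglyMeasurable).2 ⟨by fun_prop,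
      (hasFiniteIntegral_iff_ofReal (Eventually.of_forall fun z => sq_nonneg _)).2 hsq⟩
  have : IsFiniteMeasure (volume.restrict (annulus n : Set (Euc N))) :=
    isFiniteMeasure_restrict.2 hAfin
  have hL1 : IntegrableOn j (annulus n) := hL2.integrable one_le_two
  refine ⟨(annulus n).indicator j, hjm.indicator hA, indicator_nonneg fun z _ => hj0 z,
    indicator_le_self' fun z _ => hj0 z, (integrable_indicator_iff hA).2 hL1,
    (memLp_indicator_iff_restrict hA).2 hL2, ?_⟩
  rw [integral_indicator hA, integral_eq_lintegral_of_nonneg_ae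
    (Eventually.of_forall hj0) hjm.aestronglyMeasurable]
  rcases lt_or_ge c 0 with hc | hc
  · exact hc.trans_le toReal_nonneg
  · exact (ENNReal.ofReal_lt_iff_lt_toReal hc
      ((hasFiniteIntegral_iff_ofReal (Eventually.of_forall hj0)).1 hL1.2).ne).1 hn

lemma MemDJZero.mul_integral_le_of_bJ_eq {N : ℕ} {j m u v : Euc N → ℝ} {Ω : Set (Euc N)}
    {lam : ℝ} (hjm : Measurable j) (hmm : Measurable m) (hm0 : 0 ≤ m) (hmj : m ≤ j)
    (hm1 : Integrable m volume) (hm2 : MemLp m 2 volume) (hu : MemDJZero j Ω u)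
    (hv : MemDJZero j Ω v) (hv1 : Integrable v volume) (hv0 : 0 ≤ v) (huv : Monovary u v)
    (heq : bJ j u v = lam * ∫ x in Ω, u x * v x) :
    ((∫ z, m z) - lam) * ∫ x, u x * v x ≤
      (eLpNorm u 2 volume * eLpNorm m 2 volume).toReal * ∫ x, v x := by
  have hquad : ∀ {k w}, k ≤ j → MemDJZero j Ω w → quadJ k univ w < ⊤ := fun hk hw =>
    (quadJ_mono_kernel hk univ).trans_lt hw.2.2.1
  have hsplit : bJ j u v = bJ (j - m) u v + bJ m u v := by
    rw [← bJ_add_kernel, sub_add_cancel]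
    · exact integrable_energyDensity (hjm.sub hmm) (sub_nonneg.2 hmj) hu.1 hv.1
        (hquad (sub_le_self j hm0) hu) (hquad (sub_le_self j hm0) hv)
    · exact integrable_energyDensity hmm hm0 hu.1 hv.1 (hquad hmj hu) (hquad hmj hv)
  have hΩ : ∫ x in Ω, u x * v x = ∫ x, u x * v x :=
    setIntegral_eq_integral_of_ae_compl_eq_zero (hu.2.2.2.mono fun x hx hxΩ => by
      simp [hx hxΩ])
  rw [hΩ, hsplit] at heq
  linarith [bJ_nonneg (sub_nonneg.2 hmj) huv,
    le_bJ_of_integrable_kernel hm1 hm2 hu.2.1 hv.2.1 hv1 hv0]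

lemma MemDJZero.ae_le_of_bJ_eq {N : ℕ} {j m u : Euc N → ℝ} {Ω : Set (Euc N)} {lam : ℝ}
    (hjm : Measurable j) (hj0 : 0 ≤ j) (hmm : Measurable m) (hm0 : 0 ≤ m) (hmj : m ≤ j)
    (hm1 : Integrable m volume) (hm2 : MemLp m 2 volume) (hlam : lam < ∫ z, m z)
    (hΩ : volume Ω ≠ ⊤) (hu : MemDJZero j Ω u)
    (heq : ∀ v, MemDJZero j Ω v → bJ j u v = lam * ∫ x in Ω, u x * v x) :
    ∀ᵐ x, u x ≤
      (eLpNorm m 2 volume).toReal / ((∫ z, m z) - lam) * (eLpNorm u 2 volume).toReal := by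
  set K := (eLpNorm u 2 volume * eLpNorm m 2 volume).toReal
  have hMlam : 0 < (∫ z, m z) - lam := sub_pos.2 hlam
  set t := K / ((∫ z, m z) - lam)
  set v := fun x => max (u x - t) 0
  have hφ : Monotone fun a : ℝ => max (a - t) 0 := fun _ _ hab =>
    max_le_max (sub_le_sub_right hab t) le_rfl
  have hv : MemDJZero j Ω v := hu.comp_lipschitz hj0 (φ := fun a => max (a - t) 0)
    (by simpa using (LipschitzWith.id.sub (LipschitzWith.const t)).max_const 0)
    (by simpa using div_nonneg toReal_nonneg hMlam.le)
  have hv0 : 0 ≤ v := fun x => le_max_right _ _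
  have hkey : ((∫ z, m z) - lam) * ∫ x, u x * v x ≤ K * ∫ x, v x :=
    hu.mul_integral_le_of_bJ_eq hjm hmm hm0 hmj hm1 hm2 hv (hv.integrable hΩ) hv0
      ((monovary_self u).comp_monotone_left hφ).symm (heq v hv)
  have huv : ∫ x, u x * v x = (∫ x, v x ^ 2) + t * ∫ x, v x := by
    rw [← integral_const_mul, ← integral_add hv.2.1.integrable_sq ((hv.integrable hΩ).const_mul t)]
    refine integral_congr_ae (Eventually.of_forall fun x => ?_)
    rcases le_total (u x) t with h | h
    · simp [v, max_eq_right (sub_nonpos.2 h)]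
    · simp only [v, max_eq_left (sub_nonneg.2 h)]; ring
  have hv2 : ∫ x, v x ^ 2 = 0 := by
    have hKt : K = ((∫ z, m z) - lam) * t := by rw [mul_div_cancel₀ _ hMlam.ne']
    rw [huv, hKt] at hkey
    nlinarith [(integral_nonneg fun x => by positivity : 0 ≤ ∫ x, v x ^ 2)]
  filter_upwards [(integral_eq_zero_iff_of_nonneg (f := fun x => v x ^ 2)
    (fun x => sq_nonneg (v x)) hv.2.1.integrable_sq).1 hv2] with x hx
  have hvx : max (u x - t) 0 = 0 := pow_eq_zero_iff two_ne_zero |>.1 hx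
  calc u x ≤ t := by linarith [le_max_left (u x - t) 0]
    _ = _ := by simp only [t, K, toReal_mul]; ring

theorem eigenfunction_bounded_general
    {N : ℕ} (j : Euc N → ℝ)
    (hjm : Measurable j) (hj0 : ∀ z, 0 ≤ j z)
    (hjinf : (∫⁻ z, ENNReal.ofReal (j z)) = ⊤)
    (hjsq : ∀ r R : ℝ, 0 < r → r < R →
      (∫⁻ z in Metric.ball (0 : Euc N) R \ Metric.ball (0 : Euc N) r,
        ENNReal.ofReal (j z ^ 2)) < ⊤)
    (Ω : Set (Euc N)) (hΩb : Bornology.IsBounded Ω)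
    (lam : ℝ) :
    ∃ C > (0:ℝ), ∀ u : Euc N → ℝ, MemDJZero j Ω u →
      (∀ v : Euc N → ℝ, MemDJZero j Ω v → bJ j u v = lam * ∫ x in Ω, u x * v x) →
      (MemLp u ⊤ (volume.restrict Ω) ∧
        eLpNorm u ⊤ (volume.restrict Ω) ≤
          ENNReal.ofReal C * eLpNorm u 2 (volume.restrict Ω)) := by
  obtain ⟨m, hmm, hm0, hmj, hm1, hm2, hlam⟩ :=
    exists_integrable_kernel_le hjm hj0 hjinf hjsq lam
  set c := (eLpNorm m 2 volume).toReal / ((∫ z, m z) - lam)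
  have hc : 0 ≤ c := div_nonneg toReal_nonneg (sub_pos.2 hlam).le
  refine ⟨c + 1, by linarith, fun u hu heq => ?_⟩
  have hΩ : volume Ω ≠ ⊤ := hΩb.measure_lt_top.ne
  have hneg : MemDJZero j Ω (-u) := hu.comp_lipschitz hj0 LipschitzWith.id.neg neg_zero
  have hle := hu.ae_le_of_bJ_eq hjm hj0 hmm hm0 hmj hm1 hm2 hlam hΩ heq
  have hge := hneg.ae_le_of_bJ_eq hjm hj0 hmm hm0 hmj hm1 hm2 hlam hΩ fun v hv => by
    simp only [bJ_neg_left, heq v hv, Pi.neg_apply, neg_mul, integral_neg, mul_neg]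
  have hbound : ∀ᵐ x ∂(volume.restrict Ω), ‖u x‖ ≤ c * (eLpNorm u 2 volume).toReal := by
    refine ae_restrict_of_ae ?_
    filter_upwards [hle, hge] with x hx hx'
    rw [eLpNorm_neg, Pi.neg_apply] at hx'
    exact abs_le.2 ⟨by linarith, hx⟩
  refine ⟨memLp_top_of_bound hu.2.1.aestronglyMeasurable.restrict _ hbound, ?_⟩
  calc eLpNorm u ⊤ (volume.restrict Ω)
      ≤ ENNReal.ofReal (c * (eLpNorm u 2 volume).toReal) := by
        rw [eLpNorm_exponent_top]; exact eLpNormEssSup_le_of_ae_bound hbound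
    _ = ENNReal.ofReal c * eLpNorm u 2 (volume.restrict Ω) := by
        rw [ofReal_mul hc, ofReal_toReal hu.2.1.eLpNorm_ne_top,
          eLpNorm_restrict_eq_of_ae_notMem_eq_zero hu.2.2.2]
    _ ≤ ENNReal.ofReal (c + 1) * eLpNorm u 2 (volume.restrict Ω) := by
        gcongr; linarith

/-- boundedness of Dirichlet eigenfunctions. -/
theorem eigenfunction_bounded
    {N : ℕ} (hN : 0 < N) (j : Euc N → ℝ)
    (hjm : Measurable j) (hj0 : ∀ z, 0 ≤ j z) (hje : ∀ z, j (-z) = j z)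
    (hjint : (∫⁻ z, ENNReal.ofReal (min 1 (‖z‖ ^ 2) * j z)) < ⊤)
    (hjinf : (∫⁻ z, ENNReal.ofReal (j z)) = ⊤)
    (hjsq : ∀ r R : ℝ, 0 < r → r < R →
      (∫⁻ z in Metric.ball (0 : Euc N) R \ Metric.ball (0 : Euc N) r,
        ENNReal.ofReal (j z ^ 2)) < ⊤)
    (Ω : Set (Euc N)) (hΩo : IsOpen Ω) (hΩb : Bornology.IsBounded Ω)
    (lam : ℝ) (hlam : 0 < lam) :
    ∃ C > (0:ℝ), ∀ u : Euc N → ℝ, MemDJZero j Ω u →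
      (∀ v : Euc N → ℝ, MemDJZero j Ω v → bJ j u v = lam * ∫ x in Ω, u x * v x) →
      (MemLp u ⊤ (volume.restrict Ω) ∧
        eLpNorm u ⊤ (volume.restrict Ω) ≤
          ENNReal.ofReal C * eLpNorm u 2 (volume.restrict Ω)) :=
  eigenfunction_bounded_general j hjm hj0 hjinf hjsq Ω hΩb lam
end
end

section
/- Let q ∈ L¹(ℝ^N) be nonnegative and even with q = 0 almost everywhere on ℝ^N∖B_r(0) for some r > 0. Let Ω ⊆ ℝ^N be open and x₀ ∈ Ω with B_{2r}(x₀) ⊆ Ω, and let u : Ω → ℝ be measurable. Then, with (q∗q)(z) = ∫_{ℝ^N} q(z−w)q(w) dw, one has (1/2)∫_{B_r(x₀)}∫_{B_r(x₀)} (u(x)−u(y))² (q∗q)(x−y) dx dy ≤ 4 ‖q‖_{L¹(ℝ^N)} · (1/2)∫_Ω∫_Ω (u(x)−u(y))² q(x−y) dx dy. -/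
open MeasureTheory ENNReal Metric Set Filter

noncomputable section

/-
Write (q∗q)(x - y) = ∫ q(x - z) q(z - y) dz and split (u x - u y)² ≤ 2(u x - u z)² + 2(u z - u y)².
Since q is even, the two triple integrals so obtained agree after exchanging x and y. In the first,
integrating out y ∈ B_r(x₀) costs at most ‖q‖₁; and q(x - z) ≠ 0 forces |x - z| < r, so z ranges
over B_{2r}(x₀) ⊆ Ω and what is left is bounded by the quadratic form of q on Ω.
-/

theorem ENNReal.ofReal_sq_sub_le (a b c : ℝ) :
    ENNReal.ofReal ((a - c) ^ 2) ≤
      2 * ENNReal.ofReal ((a - b) ^ 2) + 2 * ENNReal.ofReal ((b - c) ^ 2) := by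
  have h : (a - c) ^ 2 ≤ 2 * (a - b) ^ 2 + 2 * (b - c) ^ 2 := by
    have := add_sq_le (a := a - b) (b := b - c)
    rw [sub_add_sub_cancel] at this
    linarith
  calc ENNReal.ofReal ((a - c) ^ 2) ≤ ENNReal.ofReal (2 * (a - b) ^ 2 + 2 * (b - c) ^ 2) :=
        ENNReal.ofReal_le_ofReal h
    _ = 2 * ENNReal.ofReal ((a - b) ^ 2) + 2 * ENNReal.ofReal ((b - c) ^ 2) := by
        rw [ENNReal.ofReal_add (by positivity) (by positivity), ENNReal.ofReal_mul zero_le_two,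
          ENNReal.ofReal_mul zero_le_two, ENNReal.ofReal_ofNat]

theorem MeasureTheory.setLIntegral_setLIntegral_add_swap {α : Type*} [MeasurableSpace α]
    {μ : Measure α} [SFinite μ] {G : α → α → ℝ≥0∞} (hG : Measurable (Function.uncurry G))
    (s : Set α) :
    ∫⁻ x in s, ∫⁻ y in s, (G x y + G y x) ∂μ ∂μ = 2 * ∫⁻ x in s, ∫⁻ y in s, G x y ∂μ ∂μ := by
  have hGx : ∀ x, Measurable (G x) := fun x => hG.comp measurable_prodMk_left
  have hG' : Measurable fun x => ∫⁻ y in s, G x y ∂μ := hG.lintegral_prod_right'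
  simp_rw [lintegral_add_left (hGx _), lintegral_add_left hG',
    lintegral_lintegral_swap (μ := μ.restrict s) (ν := μ.restrict s) hG.aemeasurable, two_mul]

section

variable {E : Type*} [NormedAddCommGroup E] [MeasurableSpace E] [BorelSpace E]

theorem MeasureTheory.AEStronglyMeasurable.exists_measurable_nonneg_even_ae_eq
    [SecondCountableTopology E] {μ : Measure E} [μ.IsNegInvariant] {q : E → ℝ}
    (hq : AEStronglyMeasurable q μ) (hq0 : 0 ≤ᵐ[μ] q) (hqe : (fun z => q (-z)) =ᵐ[μ] q) :
    ∃ p : E → ℝ, Measurable p ∧ (∀ z, 0 ≤ p z) ∧ (∀ z, p (-z) = p z) ∧ p =ᵐ[μ] q := by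
  have hq'neg : (fun z => hq.mk q (-z)) =ᵐ[μ] fun z => q (-z) :=
    (Measure.measurePreserving_neg μ).quasiMeasurePreserving.ae_eq hq.ae_eq_mk.symm
  refine ⟨fun z => min (max (hq.mk q z) 0) (max (hq.mk q (-z)) 0),
    by have := hq.stronglyMeasurable_mk.measurable; fun_prop,
    fun z => le_min (le_max_right _ _) (le_max_right _ _),
    fun z => by simp only [neg_neg, min_comm], ?_⟩
  filter_upwards [hq.ae_eq_mk, hq'neg, hqe, hq0] with z h h' he (h0 : 0 ≤ q z)
  rw [← h, h', he, max_eq_left h0, min_self]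

theorem MeasureTheory.integral_sub_mul_congr_ae {μ : Measure E} [μ.IsAddLeftInvariant]
    [μ.IsNegInvariant] {p q : E → ℝ} (h : p =ᵐ[μ] q) (v : E) :
    ∫ w, p (v - w) * p w ∂μ = ∫ w, q (v - w) * q w ∂μ := by
  refine integral_congr_ae ?_
  filter_upwards [h, (Measure.measurePreserving_sub_left μ v).quasiMeasurePreserving.ae_eq h]
    with w hw (hvw : p (v - w) = q (v - w))
  rw [hw, hvw]

theorem ENNReal.ofReal_integral_sub_mul_le [SecondCountableTopology E] {μ : Measure E}
    [μ.IsAddLeftInvariant] {p : E → ℝ} (hp : Measurable p) (hp0 : ∀ z, 0 ≤ p z) (x y : E) :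
    ENNReal.ofReal (∫ w, p (x - y - w) * p w ∂μ) ≤
      ∫⁻ z, ENNReal.ofReal (p (x - z)) * ENNReal.ofReal (p (z - y)) ∂μ := by
  rw [integral_eq_lintegral_of_nonneg_ae (ae_of_all _ fun w => mul_nonneg (hp0 _) (hp0 _))
    (by fun_prop), ← lintegral_sub_right_eq_self _ y]
  refine ofReal_toReal_le.trans (le_of_eq (lintegral_congr fun z => ?_))
  rw [sub_sub_sub_cancel_right, ENNReal.ofReal_mul (hp0 _)]

theorem MeasureTheory.lintegral_mul_sub_le_setLIntegral {μ : Measure E} [μ.IsAddLeftInvariant]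
    [μ.IsNegInvariant] {k : E → ℝ≥0∞} {r : ℝ} (hk : ∀ᵐ z ∂μ, z ∉ ball 0 r → k z = 0)
    {x : E} {Ω : Set E} (hΩ : ball x r ⊆ Ω) (g : E → ℝ≥0∞) :
    ∫⁻ z, g z * k (x - z) ∂μ ≤ ∫⁻ z in Ω, g z * k (x - z) ∂μ := by
  have hkx : ∀ᵐ z ∂μ, z ∉ ball x r → k (x - z) = 0 :=
    ((Measure.measurePreserving_sub_left μ x).quasiMeasurePreserving.ae hk).mono fun z hz hzx =>
      hz (by rwa [mem_ball_zero_iff, ← dist_eq_norm, dist_comm, ← mem_ball])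
  calc ∫⁻ z, g z * k (x - z) ∂μ = ∫⁻ z, (ball x r).indicator (fun z => g z * k (x - z)) z ∂μ :=
        lintegral_congr_ae <| hkx.mono fun z hz => by
          by_cases hzx : z ∈ ball x r <;> simp [hzx, hz]
    _ = ∫⁻ z in ball x r, g z * k (x - z) ∂μ := lintegral_indicator measurableSet_ball _
    _ ≤ ∫⁻ z in Ω, g z * k (x - z) ∂μ := lintegral_mono_set hΩ

theorem MeasureTheory.setLIntegral_lintegral_mul_sub_le [SecondCountableTopology E]
    {μ : Measure E} [SFinite μ] [μ.IsAddLeftInvariant] [μ.IsNegInvariant] {k g : E → ℝ≥0∞}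
    (hk : Measurable k) (hg : Measurable g) (s : Set E) :
    ∫⁻ y in s, ∫⁻ z, g z * k (z - y) ∂μ ∂μ ≤ (∫⁻ z, k z ∂μ) * ∫⁻ z, g z ∂μ := by
  have hgk : Measurable fun p : E × E => g p.2 * k (p.2 - p.1) := by fun_prop
  calc ∫⁻ y in s, ∫⁻ z, g z * k (z - y) ∂μ ∂μ = ∫⁻ z, g z * ∫⁻ y in s, k (z - y) ∂μ ∂μ := by
        rw [lintegral_lintegral_swap hgk.aemeasurable]
        exact lintegral_congr fun z => lintegral_const_mul _ (by fun_prop)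
    _ ≤ ∫⁻ z, g z * ∫⁻ y, k (z - y) ∂μ ∂μ := by
        gcongr
        exact Measure.restrict_le_self
    _ = (∫⁻ z, k z ∂μ) * ∫⁻ z, g z ∂μ := by
        simp_rw [lintegral_sub_left_eq_self, lintegral_mul_const _ hg, mul_comm]

theorem MeasureTheory.ofReal_sq_sub_mul_lintegral_le [SecondCountableTopology E]
    {μ : Measure E} {k : E → ℝ≥0∞} (hk : Measurable k) (hke : ∀ z, k (-z) = k z)
    {u : E → ℝ} (hu : Measurable u) (x y : E) :
    ENNReal.ofReal ((u x - u y) ^ 2) * ∫⁻ z, k (x - z) * k (z - y) ∂μ ≤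
      2 * (∫⁻ z, ENNReal.ofReal ((u x - u z) ^ 2) * k (x - z) * k (z - y) ∂μ +
        ∫⁻ z, ENNReal.ofReal ((u y - u z) ^ 2) * k (y - z) * k (z - x) ∂μ) := by
  rw [← lintegral_const_mul' _ _ ofReal_ne_top, ← lintegral_add_left (by fun_prop),
    ← lintegral_const_mul' _ _ ofNat_ne_top]
  refine lintegral_mono fun z => ?_
  have hzy : (u z - u y) ^ 2 = (u y - u z) ^ 2 := by rw [← neg_sub, neg_sq]
  have hkx : k (x - z) = k (z - x) := by rw [← neg_sub, hke]
  have hky : k (z - y) = k (y - z) := by rw [← neg_sub, hke]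
  calc ENNReal.ofReal ((u x - u y) ^ 2) * (k (x - z) * k (z - y))
      ≤ (2 * ENNReal.ofReal ((u x - u z) ^ 2) + 2 * ENNReal.ofReal ((u z - u y) ^ 2)) *
          (k (x - z) * k (z - y)) := by
        gcongr; exact ENNReal.ofReal_sq_sub_le _ _ _
    _ = _ := by rw [hzy, ← hkx, ← hky]; ring

theorem MeasureTheory.setLIntegral_sq_sub_mul_convolution_le [SecondCountableTopology E]
    {μ : Measure E} [SFinite μ] [μ.IsAddLeftInvariant] [μ.IsNegInvariant] {k : E → ℝ≥0∞}
    (hk : Measurable k) (hke : ∀ z, k (-z) = k z) {r : ℝ}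
    (hks : ∀ᵐ z ∂μ, z ∉ ball 0 r → k z = 0) {x₀ : E} {Ω : Set E} (hΩ : ball x₀ (2 * r) ⊆ Ω)
    {u : E → ℝ} (hu : Measurable u) :
    ∫⁻ x in ball x₀ r, ∫⁻ y in ball x₀ r,
        ENNReal.ofReal ((u x - u y) ^ 2) * ∫⁻ z, k (x - z) * k (z - y) ∂μ ∂μ ∂μ ≤
      4 * (∫⁻ z, k z ∂μ) *
        ∫⁻ x in Ω, ∫⁻ y in Ω, ENNReal.ofReal ((u x - u y) ^ 2) * k (x - y) ∂μ ∂μ := by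
  set B := ball x₀ r
  set F : E → E → ℝ≥0∞ := fun x y => ENNReal.ofReal ((u x - u y) ^ 2)
  set G : E → E → ℝ≥0∞ := fun x y => ∫⁻ z, F x z * k (x - z) * k (z - y) ∂μ
  have hG : Measurable (Function.uncurry G) :=
    Measurable.lintegral_prod_right' (f := fun p : (E × E) × E => F p.1.1 p.2 *
      k (p.1.1 - p.2) * k (p.2 - p.1.2)) (by fun_prop)
  have hBΩ : B ⊆ Ω := fun x hx => hΩ (ball_subset_ball (by linarith [pos_of_mem_ball hx]) hx)
  have localize : ∀ x ∈ B, ∫⁻ z, F x z * k (x - z) ∂μ ≤ ∫⁻ z in Ω, F x z * k (x - z) ∂μ :=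
    fun x hx => lintegral_mul_sub_le_setLIntegral hks
      ((ball_subset_ball' (by rw [mem_ball] at hx; linarith)).trans hΩ) _
  have hFk : Measurable fun x => ∫⁻ z in Ω, F x z * k (x - z) ∂μ :=
    Measurable.lintegral_prod_right' (f := fun p : E × E => F p.1 p.2 * k (p.1 - p.2))
      (by fun_prop)
  calc ∫⁻ x in B, ∫⁻ y in B, F x y * ∫⁻ z, k (x - z) * k (z - y) ∂μ ∂μ ∂μ
      ≤ ∫⁻ x in B, ∫⁻ y in B, 2 * (G x y + G y x) ∂μ ∂μ :=
        lintegral_mono fun x => lintegral_mono fun y =>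
          ofReal_sq_sub_mul_lintegral_le hk hke hu x y
    _ = 4 * ∫⁻ x in B, ∫⁻ y in B, G x y ∂μ ∂μ := by
        simp_rw [lintegral_const_mul' _ _ ofNat_ne_top, setLIntegral_setLIntegral_add_swap hG,
          ← mul_assoc]
        norm_num
    _ ≤ 4 * ∫⁻ x in B, (∫⁻ z, k z ∂μ) * ∫⁻ z, F x z * k (x - z) ∂μ ∂μ := by
        gcongr with x
        exact setLIntegral_lintegral_mul_sub_le hk (by fun_prop) B
    _ ≤ 4 * ∫⁻ x in B, (∫⁻ z, k z ∂μ) * ∫⁻ z in Ω, F x z * k (x - z) ∂μ ∂μ := by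
        gcongr 1
        refine setLIntegral_mono' measurableSet_ball fun x hx => ?_
        gcongr _ * ?_
        exact localize x hx
    _ ≤ 4 * (∫⁻ z, k z ∂μ) * ∫⁻ x in Ω, ∫⁻ y in Ω, F x y * k (x - y) ∂μ ∂μ := by
        rw [lintegral_const_mul _ hFk, ← mul_assoc]
        gcongr 1
        exact lintegral_mono_set hBΩ

end

theorem quadJ_congr_ae {N : ℕ} {j₁ j₂ : Euc N → ℝ} (h : j₁ =ᵐ[volume] j₂) (U : Set (Euc N))
    (u : Euc N → ℝ) : quadJ j₁ U u = quadJ j₂ U u := by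
  unfold quadJ
  congr 1
  refine lintegral_congr fun x => lintegral_congr_ae (ae_restrict_of_ae ?_)
  filter_upwards [(Measure.measurePreserving_sub_left volume x).quasiMeasurePreserving.ae_eq h]
    with y (hy : j₁ (x - y) = j₂ (x - y))
  rw [hy]

theorem quadJ_eq_lintegral {N : ℕ} (j : Euc N → ℝ) (U : Set (Euc N)) (u : Euc N → ℝ) :
    quadJ j U u = (1 / 2) *
      ∫⁻ x in U, ∫⁻ y in U, ENNReal.ofReal ((u x - u y) ^ 2) * ENNReal.ofReal (j (x - y)) := by
  simp only [quadJ, ENNReal.ofReal_mul (sq_nonneg _)]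

theorem convolution_inequality_general
    {N : ℕ} (q : Euc N → ℝ)
    (hq : Integrable q volume) (hq0 : ∀ z, 0 ≤ q z) (hqe : ∀ z, q (-z) = q z)
    (r : ℝ)
    (hqs : ∀ᵐ z ∂(volume : Measure (Euc N)), z ∉ Metric.ball (0 : Euc N) r → q z = 0)
    (Ω : Set (Euc N)) (x₀ : Euc N)
    (hball : Metric.ball x₀ (2 * r) ⊆ Ω)
    (u : Euc N → ℝ) (hu : Measurable u) :
    quadJ (fun z => ∫ w, q (z - w) * q w) (Metric.ball x₀ r) u ≤
      ENNReal.ofReal (4 * ∫ z, q z) * quadJ q Ω u := by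
  obtain ⟨p, hpm, hp0, hpe, hpq⟩ := hq.aestronglyMeasurable.exists_measurable_nonneg_even_ae_eq
    (ae_of_all _ hq0) (.of_forall hqe)
  set k : Euc N → ℝ≥0∞ := fun z => ENNReal.ofReal (p z)
  have hks : ∀ᵐ z, z ∉ ball (0 : Euc N) r → k z = 0 := by
    filter_upwards [hpq, hqs] with z hpz hqz hzr
    simp [k, hpz, hqz hzr]
  have hmass : ENNReal.ofReal (∫ z, q z) = ∫⁻ z, k z := by
    rw [← integral_congr_ae hpq,
      ofReal_integral_eq_lintegral_ofReal (hq.congr hpq.symm) (ae_of_all _ hp0)]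
  simp_rw [integral_sub_mul_congr_ae hpq.symm, ← quadJ_congr_ae hpq]
  calc quadJ (fun z => ∫ w, p (z - w) * p w) (ball x₀ r) u
      ≤ (1 / 2) * ∫⁻ x in ball x₀ r, ∫⁻ y in ball x₀ r,
          ENNReal.ofReal ((u x - u y) ^ 2) * ∫⁻ z, k (x - z) * k (z - y) := by
        rw [quadJ_eq_lintegral]
        gcongr with x y
        exact ENNReal.ofReal_integral_sub_mul_le hpm hp0 x y
    _ ≤ (1 / 2) * (4 * (∫⁻ z, k z) *
          ∫⁻ x in Ω, ∫⁻ y in Ω, ENNReal.ofReal ((u x - u y) ^ 2) * k (x - y)) := by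
        gcongr
        exact setLIntegral_sq_sub_mul_convolution_le hpm.ennreal_ofReal
          (fun z => congrArg ENNReal.ofReal (hpe z)) hks hball hu
    _ = ENNReal.ofReal (4 * ∫ z, q z) * quadJ p Ω u := by
        rw [ENNReal.ofReal_mul zero_le_four, ENNReal.ofReal_ofNat, hmass, quadJ_eq_lintegral]
        ring

/-- the convolution inequality (Lemma `iterationlemma`). -/
theorem convolution_inequality
    {N : ℕ} (hN : 0 < N) (q : Euc N → ℝ)
    (hq : Integrable q volume) (hq0 : ∀ z, 0 ≤ q z) (hqe : ∀ z, q (-z) = q z)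
    (r : ℝ) (hr : 0 < r)
    (hqs : ∀ᵐ z ∂(volume : Measure (Euc N)), z ∉ Metric.ball (0 : Euc N) r → q z = 0)
    (Ω : Set (Euc N)) (hΩo : IsOpen Ω) (x₀ : Euc N) (hx₀ : x₀ ∈ Ω)
    (hball : Metric.ball x₀ (2 * r) ⊆ Ω)
    (u : Euc N → ℝ) (hu : Measurable u) :
    quadJ (fun z => ∫ w, q (z - w) * q w) (Metric.ball x₀ r) u ≤
      ENNReal.ofReal (4 * ∫ z, q z) * quadJ q Ω u :=
  convolution_inequality_general q hq hq0 hqe r hqs Ω x₀ hball u hu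
end
end

section
/- Let σ ∈ (0,2] and let k be a kernel of order σ whose symmetric lower bound j satisfies ∫_{ℝ^N} j(z) dz = ∞. Let Ω ⊂ ℝ^N be open, bounded and connected, and let u ∈ L²(Ω) satisfy b_{k,Ω}(u) = 0. Then u is constant almost everywhere on Ω, i.e. there is c ∈ ℝ with u = c a.e. in Ω. -/
open MeasureTheory ENNReal Metric Set Filter

noncomputable section

/-!
If `b_{k,Ω}(u) = 0`, then for almost every `z` with `j(z) > 0` the vector `z` is an a.e. period of
`u` inside `Ω`: `u (x + z) = u x` for a.e. `x` with `x, x + z ∈ Ω`. Since `∫ j = ∞` while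
`∫ min{1, |z|^σ} j(z) dz` is bounded by the kernel constant, `j` cannot vanish a.e. near `0`, so
these periods have positive measure in every ball around `0`. By Steinhaus' theorem their
differences fill a neighbourhood of `0`, so near each point of `Ω` the function `u` is a.e.
invariant under all small translations, hence a.e. constant there by Fubini; connectedness of `Ω`
makes the local constants agree.
-/

namespace ZeroEnergy

theorem exists_ae_eq_const_of_locally_ae_eq_const {X α : Type*} [TopologicalSpace X]
    [SecondCountableTopology X] [MeasurableSpace X] [OpensMeasurableSpace X] {μ : Measure X}
    [μ.IsOpenPosMeasure]
    {Ω : Set X} (hΩo : IsOpen Ω) (hΩc : IsConnected Ω) {u : X → α}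
    (hloc : ∀ p ∈ Ω, ∃ c, ∃ U, IsOpen U ∧ p ∈ U ∧ ∀ᵐ x ∂μ, x ∈ U → u x = c) :
    ∃ c, ∀ᵐ x ∂μ.restrict Ω, u x = c := by
  let S : α → Set X := fun c => {p | ∃ U, IsOpen U ∧ p ∈ U ∧ ∀ᵐ x ∂μ, x ∈ U → u x = c}
  have hS_open (c : α) : IsOpen (S c) := isOpen_iff_forall_mem_open.2
    fun _ ⟨U, hU, hpU, hc⟩ => ⟨U, fun _ hq => ⟨U, hU, hq, hc⟩, hU, hpU⟩
  have hS_disj {c d : α} (hcd : c ≠ d) : Disjoint (S c) (S d) := by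
    refine disjoint_left.2 fun p ⟨U, hU, hpU, hc⟩ ⟨V, hV, hpV, hd⟩ => hcd ?_
    have hUV : ∃ᵐ x ∂μ, x ∈ U ∩ V :=
      frequently_ae_mem_iff.2 ((hU.inter hV).measure_ne_zero μ ⟨p, hpU, hpV⟩)
    obtain ⟨x, ⟨hx, hxc⟩, hxd⟩ := ((hUV.and_eventually hc).and_eventually hd).exists
    exact (hxc hx.1).symm.trans (hxd hx.2)
  obtain ⟨p₀, hp₀⟩ := hΩc.nonempty
  obtain ⟨c, hp₀c⟩ := hloc p₀ hp₀
  have hΩS : Ω ⊆ S c := by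
    refine hΩc.isPreconnected.subset_left_of_subset_union (hS_open c)
      (isOpen_biUnion fun d _ => hS_open d)
      (disjoint_iUnion₂_right.2 fun d hd => hS_disj (Ne.symm hd))
      (fun p hp => ?_) ⟨p₀, hp₀, hp₀c⟩
    obtain ⟨d, hd⟩ := hloc p hp
    by_cases hdc : d = c
    · exact Or.inl (hdc ▸ hd)
    · exact Or.inr (mem_biUnion hdc hd)
  refine ⟨c, (ae_restrict_iff' hΩo.measurableSet).2 (ae_iff.2 ?_)⟩
  refine measure_null_of_locally_null _ fun p hp => ?_
  obtain ⟨U, hU, hpU, hc⟩ := hΩS (Classical.not_imp.1 hp).1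
  exact ⟨_, inter_mem_nhdsWithin _ (hU.mem_nhds hpU),
    measure_mono_null (fun x hx => Classical.not_imp.2 ⟨hx.2, (Classical.not_imp.1 hx.1).2⟩)
      (ae_iff.1 hc)⟩

def aePeriods {E α : Type*} [Add E] [MeasurableSpace E] (μ : Measure E) (u : E → α)
    (Ω : Set E) : Set E :=
  {z | ∀ᵐ x ∂μ, x ∈ Ω → x + z ∈ Ω → u (x + z) = u x}

section Periods

variable {E : Type*} [AddGroup E] [MeasurableSpace E] {μ : Measure E} {Ω : Set E}

theorem measurableSet_aePeriods [MeasurableAdd₂ E] [SFinite μ] (hΩ : MeasurableSet Ω)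
    {u : E → ℝ} (hu : Measurable u) : MeasurableSet (aePeriods μ u Ω) := by
  have hbad : MeasurableSet
      {q : E × E | ¬(q.2 ∈ Ω → q.2 + q.1 ∈ Ω → u (q.2 + q.1) = u q.2)} := by
    measurability
  exact measurable_measure_prodMk_left hbad (measurableSet_singleton 0)

theorem ae_add_sub_eq [MeasurableAdd E] [μ.IsAddRightInvariant] {α : Type*} {u : E → α}
    {a b : E}
    (ha : a ∈ aePeriods μ u Ω) (hb : b ∈ aePeriods μ u Ω) :
    ∀ᵐ x ∂μ, x ∈ Ω → x + a ∈ Ω → x + (a - b) ∈ Ω → u (x + (a - b)) = u x := by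
  filter_upwards [ha, (measurePreserving_add_right μ (a - b)).quasiMeasurePreserving.ae hb]
    with x hxa hxb hx hxa_mem hxab_mem
  rw [add_assoc, sub_add_cancel] at hxb
  exact (hxb hxab_mem hxa_mem).symm.trans (hxa hx hxa_mem)

end Periods

section HaarMeasure

variable {E : Type*} [NormedAddCommGroup E] [NormedSpace ℝ E] [FiniteDimensional ℝ E]
  [MeasurableSpace E] [BorelSpace E] {μ : Measure E} [μ.IsAddHaarMeasure] {u : E → ℝ}

theorem exists_ball_forall_ae_add_eq {Ω : Set E} (hΩ : IsOpen Ω) (hu : Measurable u)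
    (hper : ∀ r > 0, 0 < μ (aePeriods μ u Ω ∩ ball 0 r)) {p : E} (hp : p ∈ Ω) :
    ∃ r > 0, ∃ δ > 0, ∀ s ∈ ball (0 : E) δ, ∀ᵐ x ∂μ, x ∈ ball p r → u (x + s) = u x := by
  obtain ⟨ε, hε, hball⟩ := Metric.isOpen_iff.1 hΩ p hp
  have hr : 0 < ε / 3 := by positivity
  have hA := Measure.sub_mem_nhds_zero_of_addHaar_pos μ _
    ((measurableSet_aePeriods hΩ.measurableSet hu).inter measurableSet_ball) (hper _ hr)
  obtain ⟨δ, hδ, hδA⟩ := Metric.mem_nhds_iff.1 hA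
  refine ⟨ε / 3, hr, δ, hδ, fun s hs => ?_⟩
  obtain ⟨a, ⟨ha, ha_norm⟩, b, ⟨hb, hb_norm⟩, rfl⟩ := hδA hs
  rw [mem_ball_zero_iff] at ha_norm hb_norm
  filter_upwards [ae_add_sub_eq ha hb] with x hx hxp
  rw [mem_ball] at hxp
  have hxa : dist (x + a) x = ‖a‖ := dist_self_add_left a x
  have hxab : dist (x + (a - b)) x ≤ ‖a‖ + ‖b‖ :=
    (dist_self_add_left (a - b) x).trans_le (norm_sub_le a b)
  refine hx (hball ?_) (hball ?_) (hball ?_) <;> rw [mem_ball] <;>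
    linarith [dist_triangle (x + a) x p, dist_triangle (x + (a - b)) x p]

theorem exists_ae_eq_const_of_forall_ae_add_eq (hu : Measurable u) {p : E} {r δ : ℝ}
    (hr : 0 < r) (hδ : 0 < δ)
    (h : ∀ s ∈ ball (0 : E) δ, ∀ᵐ x ∂μ, x ∈ ball p r → u (x + s) = u x) :
    ∃ c, ∃ U, IsOpen U ∧ p ∈ U ∧ ∀ᵐ x ∂μ, x ∈ U → u x = c := by
  have hswap : ∀ᵐ x ∂μ, ∀ᵐ s ∂μ, s ∈ ball (0 : E) δ → x ∈ ball p r → u (x + s) = u x :=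
    (Measure.ae_ae_comm (by measurability)).2
      (ae_of_all _ fun s => eventually_imp_distrib_left.2 (h s))
  have hnear : ∃ᵐ x ∂μ, x ∈ ball p (min r δ) :=
    frequently_ae_mem_iff.2 (measure_ball_pos μ p (lt_min hr hδ)).ne'
  obtain ⟨x₀, hx₀p, hx₀⟩ := (hnear.and_eventually hswap).exists
  rw [mem_ball] at hx₀p
  refine ⟨u x₀, ball x₀ δ, isOpen_ball, ?_, ?_⟩
  · rw [mem_ball']
    exact hx₀p.trans_le (min_le_right r δ)
  · filter_upwards [(measurePreserving_sub_right μ x₀).quasiMeasurePreserving.ae hx₀]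
      with x hx hxδ
    rw [add_sub_cancel] at hx
    refine hx ?_ (mem_ball.2 (hx₀p.trans_le (min_le_left r δ)))
    rwa [mem_ball_zero_iff, ← dist_eq_norm]

theorem exists_ae_eq_const_of_measure_aePeriods_inter_ball_pos {Ω : Set E} (hΩo : IsOpen Ω)
    (hΩc : IsConnected Ω) (hu : Measurable u)
    (hper : ∀ r > 0, 0 < μ (aePeriods μ u Ω ∩ ball 0 r)) :
    ∃ c, ∀ᵐ x ∂μ.restrict Ω, u x = c :=
  exists_ae_eq_const_of_locally_ae_eq_const hΩo hΩc fun _ hp =>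
    let ⟨_, hr, _, hδ, h⟩ := exists_ball_forall_ae_add_eq hΩo hu hper hp
    exists_ae_eq_const_of_forall_ae_add_eq hu hr hδ h

end HaarMeasure

theorem frequently_ne_zero_of_lintegral_eq_top {E : Type*} [SeminormedAddCommGroup E]
    [MeasurableSpace E] {μ : Measure E} {σ : ℝ} (hσ : 0 < σ) {f : E → ℝ≥0∞}
    (hf : ∫⁻ z, f z ∂μ = ⊤) (hf_weighted : ∫⁻ z, ENNReal.ofReal (min 1 (‖z‖ ^ σ)) * f z ∂μ ≠ ⊤)
    {r : ℝ} (hr : 0 < r) : ∃ᵐ z ∂μ, z ∈ ball (0 : E) r ∧ f z ≠ 0 := by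
  set m := ENNReal.ofReal (min 1 (r ^ σ))
  have hm : m ≠ 0 := by simp [m, Real.rpow_pos_of_pos hr]
  by_contra hnot
  have hle : ∀ᵐ z ∂μ, f z ≤ m⁻¹ * (ENNReal.ofReal (min 1 (‖z‖ ^ σ)) * f z) := by
    refine (not_frequently.1 hnot).mono fun z hz => ?_
    by_cases hzr : z ∈ ball (0 : E) r
    · simp [not_not.1 (not_and.1 hz hzr)]
    have hrz : r ≤ ‖z‖ := by simpa using hzr
    calc f z = m⁻¹ * (m * f z) := by rw [← mul_assoc, ENNReal.inv_mul_cancel hm (by simp [m]),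
          one_mul]
      _ ≤ m⁻¹ * (ENNReal.ofReal (min 1 (‖z‖ ^ σ)) * f z) := by
          gcongr
          exact ENNReal.ofReal_le_ofReal (min_le_min le_rfl (Real.rpow_le_rpow hr.le hrz hσ.le))
  have htop := (lintegral_mono_ae hle).trans_eq (lintegral_const_mul' _ _ (by simpa using hm))
  rw [hf, top_le_iff] at htop
  exact ENNReal.mul_ne_top (by simpa [m] using Real.rpow_pos_of_pos hr σ) hf_weighted htop

section Kernel

variable {N : ℕ} {k : Euc N → Euc N → ℝ}

theorem ae_symLB_le (hk0 : ∀ x y, 0 ≤ k x y) (z : Euc N) :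
    ∀ᵐ x, symLB k z ≤ k x (x + z) :=
  (ae_essInf_le (isBoundedUnder_of ⟨0, fun _ => le_min (hk0 _ _) (hk0 _ _)⟩)).mono
    fun _ hx => hx.trans (min_le_left _ _)

theorem ae_ae_eq_of_quadForm_eq_zero (hkm : Measurable fun p : Euc N × Euc N => k p.1 p.2)
    {Ω : Set (Euc N)} (hΩ : MeasurableSet Ω) {u : Euc N → ℝ} (hu : Measurable u)
    (hq : quadForm k Ω u = 0) :
    ∀ᵐ x, ∀ᵐ y, x ∈ Ω → y ∈ Ω → 0 < k x y → u x = u y := by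
  have hF : Measurable fun p : Euc N × Euc N =>
      ENNReal.ofReal ((u p.1 - u p.2) ^ 2 * k p.1 p.2) := by
    fun_prop
  have hint : ∫⁻ x in Ω, ∫⁻ y in Ω, ENNReal.ofReal ((u x - u y) ^ 2 * k x y) = 0 := by
    simpa [quadForm] using hq
  have hx := (lintegral_eq_zero_iff hF.lintegral_prod_right').1 hint
  filter_upwards [(ae_restrict_iff' hΩ).1 hx] with x hx'
  refine eventually_imp_distrib_left.2 fun hxΩ => ?_
  have hy := (lintegral_eq_zero_iff (hF.comp measurable_prodMk_left)).1 (hx' hxΩ)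
  filter_upwards [(ae_restrict_iff' hΩ).1 hy] with y hy' hyΩ hk
  have hzero : (u x - u y) ^ 2 * k x y ≤ 0 := ENNReal.ofReal_eq_zero.1 (hy' hyΩ)
  have hsq : (u x - u y) ^ 2 ≤ 0 := nonpos_of_mul_nonpos_left hzero hk
  exact sub_eq_zero.1 (pow_eq_zero_iff two_ne_zero |>.1 (le_antisymm hsq (sq_nonneg _)))

theorem ae_mem_aePeriods_of_symLB_pos (hkm : Measurable fun p : Euc N × Euc N => k p.1 p.2)
    (hk0 : ∀ x y, 0 ≤ k x y) {Ω : Set (Euc N)} (hΩ : MeasurableSet Ω) {u : Euc N → ℝ}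
    (hu : Measurable u) (hq : quadForm k Ω u = 0) :
    ∀ᵐ z, 0 < symLB k z → z ∈ aePeriods volume u Ω := by
  have hpairs := ae_ae_eq_of_quadForm_eq_zero hkm hΩ hu hq
  have hshift : ∀ᵐ x, ∀ᵐ z, x ∈ Ω → x + z ∈ Ω → 0 < k x (x + z) → u x = u (x + z) :=
    hpairs.mono fun x hx => (measurePreserving_add_left volume x).quasiMeasurePreserving.ae hx
  filter_upwards [(Measure.ae_ae_comm (by measurability)).1 hshift] with z hz hpos
  filter_upwards [hz, ae_symLB_le hk0 z] with x hx hle hxΩ hxzΩ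
  exact (hx hxΩ hxzΩ (hpos.trans_le hle)).symm

theorem lintegral_min_rpow_mul_le {σ C : ℝ}
    (hkm : Measurable fun p : Euc N × Euc N => k p.1 p.2) (hk0 : ∀ x y, 0 ≤ k x y)
    (hkC : ∀ x, ∫⁻ y, ENNReal.ofReal (min 1 (‖x - y‖ ^ σ) * k x y) ≤ ENNReal.ofReal C)
    {J : Euc N → ℝ≥0∞} (hJm : Measurable J) (hJ : ∀ z, J z ≤ ENNReal.ofReal (symLB k z)) :
    ∫⁻ z, ENNReal.ofReal (min 1 (‖z‖ ^ σ)) * J z ≤ ENNReal.ofReal C := by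
  have hJk (z : Euc N) : ∀ᵐ x, J z ≤ ENNReal.ofReal (k x (x + z)) :=
    (ae_symLB_le hk0 z).mono fun _ hx => (hJ z).trans (ENNReal.ofReal_le_ofReal hx)
  have hswap : ∀ᵐ x, ∀ᵐ z, J z ≤ ENNReal.ofReal (k x (x + z)) :=
    (Measure.ae_ae_comm (by measurability)).1 (ae_of_all _ hJk)
  obtain ⟨x₀, hx₀⟩ := hswap.exists
  calc ∫⁻ z, ENNReal.ofReal (min 1 (‖z‖ ^ σ)) * J z
      ≤ ∫⁻ z, ENNReal.ofReal (min 1 (‖x₀ - (x₀ + z)‖ ^ σ) * k x₀ (x₀ + z)) := by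
        refine lintegral_mono_ae (hx₀.mono fun z hz => ?_)
        rw [ENNReal.ofReal_mul (by positivity), sub_add_cancel_left, norm_neg]
        gcongr
    _ = ∫⁻ y, ENNReal.ofReal (min 1 (‖x₀ - y‖ ^ σ) * k x₀ y) :=
        lintegral_add_left_eq_self (fun y => ENNReal.ofReal (min 1 (‖x₀ - y‖ ^ σ) * k x₀ y)) x₀
    _ ≤ ENNReal.ofReal C := hkC x₀

theorem measure_aePeriods_inter_ball_pos {σ : ℝ} (hσ : 0 < σ) (hk : IsKernel N σ k)
    (hj : ∫⁻ z, ENNReal.ofReal (symLB k z) = ⊤) {Ω : Set (Euc N)} (hΩ : MeasurableSet Ω)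
    {u : Euc N → ℝ} (hu : Measurable u) (hq : quadForm k Ω u = 0) :
    ∀ r > 0, 0 < volume (aePeriods volume u Ω ∩ ball 0 r) := by
  obtain ⟨hkm, hk0, -, C, hkC⟩ := hk
  -- `symLB k` need not be measurable, so we pass to a measurable minorant with the same integral.
  obtain ⟨J, hJm, hJle, hJeq⟩ :=
    exists_measurable_le_lintegral_eq volume fun z => ENNReal.ofReal (symLB k z)
  have hper := ae_mem_aePeriods_of_symLB_pos hkm hk0 hΩ hu hq
  intro r hr
  have hJ := frequently_ne_zero_of_lintegral_eq_top hσ (hJeq ▸ hj)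
    ((lintegral_min_rpow_mul_le hkm hk0 hkC hJm hJle).trans_lt ENNReal.ofReal_lt_top).ne hr
  refine pos_iff_ne_zero.2 (frequently_ae_mem_iff.1 ((hJ.and_eventually hper).mono ?_))
  rintro z ⟨⟨hzr, hJz⟩, hzper⟩
  exact ⟨hzper (ENNReal.ofReal_pos.1 ((pos_iff_ne_zero.2 hJz).trans_le (hJle z))), hzr⟩

end Kernel

end ZeroEnergy

theorem zero_energy_constant_general
    {N : ℕ} {σ : ℝ} (hσ0 : 0 < σ)
    (k : Euc N → Euc N → ℝ) (hk : IsKernel N σ k)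
    (hj : (∫⁻ z, ENNReal.ofReal (symLB k z)) = ⊤)
    (Ω : Set (Euc N)) (hΩo : IsOpen Ω) (hΩconn : IsConnected Ω)
    (u : Euc N → ℝ) (hum : Measurable u)
    (hq : quadForm k Ω u = 0) :
    ∃ c : ℝ, ∀ᵐ x ∂(volume.restrict Ω), u x = c :=
  ZeroEnergy.exists_ae_eq_const_of_measure_aePeriods_inter_ball_pos hΩo hΩconn hum
    (ZeroEnergy.measure_aePeriods_inter_ball_pos hσ0 hk hj hΩo.measurableSet hum hq)

/-- functions with vanishing energy are constant. -/
theorem zero_energy_constant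
    {N : ℕ} (hN : 0 < N) {σ : ℝ} (hσ0 : 0 < σ) (hσ2 : σ ≤ 2)
    (k : Euc N → Euc N → ℝ) (hk : IsKernel N σ k)
    (hj : (∫⁻ z, ENNReal.ofReal (symLB k z)) = ⊤)
    (Ω : Set (Euc N)) (hΩo : IsOpen Ω) (hΩb : Bornology.IsBounded Ω) (hΩconn : IsConnected Ω)
    (u : Euc N → ℝ) (hum : Measurable u) (huL2 : MemLp u 2 (volume.restrict Ω))
    (hq : quadForm k Ω u = 0) :
    ∃ c : ℝ, ∀ᵐ x ∂(volume.restrict Ω), u x = c :=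
  zero_energy_constant_general hσ0 k hk hj Ω hΩo hΩconn u hum hq
end
end

section
/- Let σ ∈ (0,1) and let k be a kernel of order σ. Let Ω ⊂ ℝ^N be a bounded open set with Lipschitz boundary. Then the indicator function 1_Ω belongs to D^k(ℝ^N); that is, b_k(1_Ω) = ∫_Ω ∫_{ℝ^N∖Ω} k(x,y) dy dx < ∞. -/
open MeasureTheory ENNReal Metric Set Filter

noncomputable section

/-!
Write `d(x)` for the distance from `x` to `ℝ^N ∖ Ω`. Since `1_Ω` only jumps across `∂Ω`, symmetry
of `k` gives `b_k(1_Ω) = ∫_Ω κ(x) dx` with `κ(x) = ∫_{ℝ^N∖Ω} k(x,y) dy`, and as `|x - y| ≥ d(x)`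
there, the order-`σ` bound on `k` gives `κ(x) ≤ C (1 + d(x)^{-σ})`. So it suffices that
`d^{-σ}` is integrable on `Ω`. By compactness of `closure Ω` this is a local question; it is clear
near interior points, and near a boundary point, in a chart where `Ω` lies above the graph of an
`L`-Lipschitz function `γ`, the height `t(x) = x_N - γ(x')` above the graph satisfies
`d(x) ≥ t(x) / (1 + L)`. By Fubini, integrating `t^{-σ}` over a box reduces to the one-dimensional
integral `∫_0^D s^{-σ} ds`, which is finite because `σ < 1`.
-/

open scoped NNReal Topology

theorem quadForm_univ_indicator_one {N : ℕ} {k : Euc N → Euc N → ℝ}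
    (hkm : Measurable fun p : Euc N × Euc N => k p.1 p.2) (hk : ∀ x y, k x y = k y x)
    {Ω : Set (Euc N)} (hΩ : MeasurableSet Ω) :
    quadForm k univ (Ω.indicator fun _ => (1 : ℝ)) = ∫⁻ x in Ω, kappa k Ω x := by
  set u := Ω.indicator fun _ => (1 : ℝ)
  have hin : ∀ x ∈ Ω, ∫⁻ y, ENNReal.ofReal ((u x - u y) ^ 2 * k x y) = kappa k Ω x := by
    intro x hx
    rw [← lintegral_add_compl _ hΩ, kappa, setLIntegral_congr_fun hΩ (g := 0) fun y hy => by
      simp [u, hx, hy], setLIntegral_congr_fun hΩ.compl (g := fun y => ENNReal.ofReal (k x y))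
      fun y hy => by simp [u, hx, hy.out]]
    simp
  have hout : ∀ x ∈ Ωᶜ, ∫⁻ y, ENNReal.ofReal ((u x - u y) ^ 2 * k x y) =
      ∫⁻ y in Ω, ENNReal.ofReal (k y x) := by
    intro x hx
    rw [← lintegral_add_compl _ hΩ, setLIntegral_congr_fun hΩ
      (g := fun y => ENNReal.ofReal (k y x)) fun y hy => by simp [u, hx.out, hy, hk x y],
      setLIntegral_congr_fun hΩ.compl (g := 0) fun y hy => by simp [u, hx.out, hy.out]]
    simp
  have hswap : ∫⁻ x in Ωᶜ, ∫⁻ y in Ω, ENNReal.ofReal (k y x) = ∫⁻ y in Ω, kappa k Ω y :=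
    lintegral_lintegral_swap ((hkm.comp measurable_swap).ennreal_ofReal).aemeasurable
  rw [quadForm, Measure.restrict_univ, ← lintegral_add_compl _ hΩ,
    setLIntegral_congr_fun hΩ hin, setLIntegral_congr_fun hΩ.compl hout, hswap, ← two_mul,
    ← mul_assoc, one_div, ENNReal.inv_mul_cancel two_ne_zero ofNat_ne_top, one_mul]

theorem one_le_add_rpow_neg_mul_min_one_rpow {σ d ρ : ℝ} (hσ : 0 ≤ σ) (hd : 0 < d)
    (hdρ : d ≤ ρ) : 1 ≤ (1 + d ^ (-σ)) * min 1 (ρ ^ σ) := by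
  have hdσ : 0 ≤ d ^ (-σ) := by positivity
  rcases min_choice 1 (ρ ^ σ) with hm | hm <;> rw [hm]
  · linarith
  · calc (1 : ℝ) = d ^ (-σ) * d ^ σ := by rw [← Real.rpow_add hd, neg_add_cancel, Real.rpow_zero]
      _ ≤ d ^ (-σ) * ρ ^ σ := by gcongr
      _ ≤ (1 + d ^ (-σ)) * ρ ^ σ :=
          mul_le_mul_of_nonneg_right (by linarith) (Real.rpow_nonneg (hd.le.trans hdρ) σ)

theorem kappa_le_one_add_infDist_rpow_neg_mul {N : ℕ} {σ : ℝ} (hσ : 0 ≤ σ)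
    {k : Euc N → Euc N → ℝ} (hk : ∀ x y, 0 ≤ k x y)
    {Ω : Set (Euc N)} (hΩ : MeasurableSet Ω) {x : Euc N} (hx : 0 < infDist x Ωᶜ) :
    kappa k Ω x ≤ ENNReal.ofReal (1 + infDist x Ωᶜ ^ (-σ)) *
      ∫⁻ y, ENNReal.ofReal (min 1 (‖x - y‖ ^ σ) * k x y) := by
  rw [← lintegral_const_mul' _ _ ofReal_ne_top]
  refine (setLIntegral_mono' hΩ.compl fun y hy => ?_).trans (setLIntegral_le_lintegral _ _)
  rw [← ENNReal.ofReal_mul (by positivity), ← mul_assoc]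
  refine ENNReal.ofReal_le_ofReal (le_mul_of_one_le_left (hk x y) ?_)
  exact one_le_add_rpow_neg_mul_min_one_rpow hσ hx
    ((infDist_le_dist_of_mem hy).trans_eq (dist_eq_norm x y))

theorem measurePreserving_isometryEquiv {N : ℕ} (e : Euc N ≃ᵢ Euc N) :
    MeasurePreserving e volume volume := by
  have he : ⇑e = (· + e 0) ∘ e.toRealLinearIsometryEquiv := by
    funext x
    simp [IsometryEquiv.toRealLinearIsometryEquiv_apply]
  rw [he]
  exact (measurePreserving_add_right volume (e 0)).comp
    e.toRealLinearIsometryEquiv.measurePreserving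

def splitLast (n : ℕ) : Euc (n + 1) ≃ᵐ ℝ × (Fin n → ℝ) :=
  (MeasurableEquiv.toLp 2 (Fin (n + 1) → ℝ)).symm.trans
    (MeasurableEquiv.piFinSuccAbove (fun _ => ℝ) (Fin.last n))

theorem splitLast_apply {n : ℕ} (z : Euc (n + 1)) :
    splitLast n z = (z (Fin.last n), fun j => z j.castSucc) := by
  simp [splitLast, MeasurableEquiv.piFinSuccAbove, Fin.init_def]

theorem measurePreserving_splitLast (n : ℕ) : MeasurePreserving (splitLast n) volume volume :=
  (EuclideanSpace.volume_preserving_symm_measurableEquiv_toLp _).trans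
    (volume_preserving_piFinSuccAbove (fun _ => ℝ) (Fin.last n))

theorem lintegral_prod_indicator_comp_sub {α : Type*} [MeasurableSpace α] (μ : Measure α)
    [SFinite μ] {F : ℝ → ℝ≥0∞} (hF : Measurable F) {g : α → ℝ} (hg : Measurable g)
    {B : Set α} (hB : MeasurableSet B) :
    ∫⁻ q, B.indicator (fun v => F (q.1 - g v)) q.2 ∂(volume.prod μ) = μ B * ∫⁻ s, F s := by
  have hmeas : Measurable fun q : ℝ × α => B.indicator (fun v => F (q.1 - g v)) q.2 := by
    refine Measurable.piecewise (hB.preimage measurable_snd) ?_ measurable_const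
    exact hF.comp (measurable_fst.sub (hg.comp measurable_snd))
  rw [lintegral_prod_symm _ hmeas.aemeasurable]
  calc ∫⁻ v, ∫⁻ a, B.indicator (fun v => F (a - g v)) v ∂volume ∂μ
      = ∫⁻ v, B.indicator (fun _ => ∫⁻ s, F s) v ∂μ := by
        refine lintegral_congr fun v => ?_
        by_cases hv : v ∈ B
        · simp only [indicator_of_mem hv]
          exact lintegral_sub_right_eq_self F (g v)
        · simp [indicator_of_notMem hv]
    _ = μ B * ∫⁻ s, F s := by rw [lintegral_indicator_const hB, mul_comm]

theorem setLIntegral_ball_comp_chart_lt_top {n : ℕ} (e : Euc (n + 1) ≃ᵢ Euc (n + 1))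
    {γ : Euc (n + 1) → ℝ} (hγ : Measurable γ)
    (hγdep : ∀ z w : Euc (n + 1), (∀ j : Fin n, z j.castSucc = w j.castSucc) → γ z = γ w)
    {F : ℝ → ℝ≥0∞} (hF : Measurable F) (hFint : ∫⁻ s, F s < ⊤) (p : Euc (n + 1)) (r : ℝ) :
    ∫⁻ x in ball p r, F (e x (Fin.last n) - γ (e x)) < ⊤ := by
  set B : Set (Fin n → ℝ) := closedBall (fun j => e p j.castSucc) r
  set g : (Fin n → ℝ) → ℝ := fun v => γ ((splitLast n).symm (0, v))
  have hg : Measurable g := hγ.comp ((splitLast n).symm.measurable.comp measurable_prodMk_left)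
  have hγg : ∀ z, γ z = g (splitLast n z).2 := fun z => hγdep _ _ fun j => by
    simp [splitLast, MeasurableEquiv.piFinSuccAbove, Fin.init_def]
  have hle : ∀ z, (ball (e p) r).indicator (fun z => F (z (Fin.last n) - γ z)) z ≤
      B.indicator (fun v => F ((splitLast n z).1 - g v)) (splitLast n z).2 := by
    intro z
    by_cases hz : z ∈ ball (e p) r
    · have hzB : (splitLast n z).2 ∈ B := by
        rw [splitLast_apply, mem_closedBall, dist_pi_le_iff (dist_nonneg.trans (le_of_lt hz))]
        exact fun j => (PiLp.dist_apply_le z (e p) _).trans (le_of_lt hz)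
      rw [indicator_of_mem hz, indicator_of_mem hzB, ← hγg, splitLast_apply]
    · simp [indicator_of_notMem hz]
  calc ∫⁻ x in ball p r, F (e x (Fin.last n) - γ (e x))
      = ∫⁻ z in ball (e p) r, F (z (Fin.last n) - γ z) := by
        rw [← e.isometry.preimage_ball,
          (measurePreserving_isometryEquiv e).setLIntegral_comp_preimage_emb
            e.toHomeomorph.measurableEmbedding (fun z => F (z (Fin.last n) - γ z))]
    _ = ∫⁻ z, (ball (e p) r).indicator (fun z => F (z (Fin.last n) - γ z)) z :=
        (lintegral_indicator measurableSet_ball _).symm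
    _ ≤ ∫⁻ z, B.indicator (fun v => F ((splitLast n z).1 - g v)) (splitLast n z).2 :=
        lintegral_mono hle
    _ = ∫⁻ y : ℝ × (Fin n → ℝ), B.indicator (fun v => F (y.1 - g v)) y.2 :=
        (measurePreserving_splitLast n).lintegral_comp_emb (splitLast n).measurableEmbedding
          (fun y : ℝ × (Fin n → ℝ) => B.indicator (fun v => F (y.1 - g v)) y.2)
    _ = volume B * ∫⁻ s, F s :=
        lintegral_prod_indicator_comp_sub volume hF hg measurableSet_closedBall
    _ < ⊤ := ENNReal.mul_lt_top measure_closedBall_lt_top hFint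

theorem lintegral_Ioc_rpow_neg_lt_top {σ D : ℝ} (hσ : σ < 1) (hD : 0 ≤ D) :
    ∫⁻ s in Ioc 0 D, ENNReal.ofReal (s ^ (-σ)) < ⊤ :=
  ((intervalIntegrable_iff_integrableOn_Ioc_of_le hD).1
    (intervalIntegral.intervalIntegrable_rpow' (by linarith))).setLIntegral_lt_top

theorem div_le_infDist_compl_of_lipschitzWith {X : Type*} [MetricSpace X] {Ω U : Set X}
    (hne : Ωᶜ.Nonempty) {t : X → ℝ} {c : ℝ≥0} (ht : LipschitzWith c t)
    (hΩU : ∀ y ∈ U, y ∈ Ω ↔ 0 < t y) {p : X} {r : ℝ} (hU : ball p (2 * r) ⊆ U) {x : X}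
    (hx : x ∈ ball p r) (htx : t x ≤ c * r) : t x / c ≤ infDist x Ωᶜ := by
  refine (le_infDist hne).2 fun y hy => ?_
  by_cases hyU : y ∈ U
  · have hty : t y ≤ 0 := not_lt.1 fun h => hy ((hΩU y hyU).2 h)
    have hlip : t x ≤ t y + c * dist x y := ht.le_add_mul x y
    exact div_le_of_le_mul₀ c.2 dist_nonneg (by linarith)
  · have hyp : 2 * r ≤ dist y p := not_lt.1 fun h => hyU (hU (mem_ball.2 h))
    have := dist_triangle y x p
    rw [dist_comm y x] at this
    have hr : 0 ≤ r := dist_nonneg.trans (mem_ball.1 hx).le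
    exact (div_le_of_le_mul₀ c.2 hr (by rwa [mul_comm])).trans (by linarith [mem_ball.1 hx])

theorem mem_iff_pos_of_chart {n : ℕ} {Ω U : Set (Euc (n + 1))} {e : Euc (n + 1) ≃ᵢ Euc (n + 1)}
    {γ : Euc (n + 1) → ℝ}
    (hchart : Ω ∩ U = {x ∈ U | ∀ i : Fin (n + 1), (i : ℕ) + 1 = n + 1 → γ (e x) < e x i})
    {y : Euc (n + 1)} (hy : y ∈ U) : y ∈ Ω ↔ 0 < e y (Fin.last n) - γ (e y) := by
  have := Set.ext_iff.1 hchart y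
  simp only [mem_inter_iff, hy, and_true, mem_ofPred_eq, true_and] at this
  rw [this, sub_pos]
  refine ⟨fun h => h _ (by simp), fun h i hi => ?_⟩
  rwa [show i = Fin.last n from Fin.ext (by simp only [Fin.val_last]; omega)]

theorem lipschitzWith_last_sub_comp {n : ℕ} (e : Euc (n + 1) ≃ᵢ Euc (n + 1))
    {γ : Euc (n + 1) → ℝ} {L : ℝ≥0} (hγ : LipschitzWith L γ) :
    LipschitzWith (1 + L) fun x => e x (Fin.last n) - γ (e x) := by
  have hlast : LipschitzWith 1 fun z : Euc (n + 1) => z (Fin.last n) :=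
    LipschitzWith.of_dist_le_mul fun z w => by simpa using PiLp.dist_apply_le z w (Fin.last n)
  simpa using (hlast.comp e.isometry.lipschitz).sub (hγ.comp e.isometry.lipschitz)

theorem setLIntegral_inter_ball_infDist_compl_rpow_neg_lt_top {n : ℕ} {σ : ℝ} (hσ0 : 0 ≤ σ)
    (hσ1 : σ < 1) {Ω U : Set (Euc (n + 1))} (hΩ : MeasurableSet Ω)
    {e : Euc (n + 1) ≃ᵢ Euc (n + 1)} {γ : Euc (n + 1) → ℝ} {L : ℝ≥0} (hγ : LipschitzWith L γ)
    (hγdep : ∀ z w : Euc (n + 1), (∀ j : Fin n, z j.castSucc = w j.castSucc) → γ z = γ w)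
    (hΩU : ∀ y ∈ U, y ∈ Ω ↔ 0 < e y (Fin.last n) - γ (e y)) {p : Euc (n + 1)} (hp : p ∉ Ω)
    {r : ℝ} (hr : 0 < r) (hrU : ball p (2 * r) ⊆ U) :
    ∫⁻ x in Ω ∩ ball p r, ENNReal.ofReal (infDist x Ωᶜ ^ (-σ)) < ⊤ := by
  set t : Euc (n + 1) → ℝ := fun x => e x (Fin.last n) - γ (e x)
  have ht : LipschitzWith (1 + L) t := lipschitzWith_last_sub_comp e hγ
  set c : ℝ := 1 + L
  have hc : 0 < c := by positivity
  set F := (Ioc 0 (c * r)).indicator fun s : ℝ => ENNReal.ofReal (s ^ (-σ))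
  have hbound : ∀ x ∈ Ω ∩ ball p r,
      ENNReal.ofReal (infDist x Ωᶜ ^ (-σ)) ≤ ENNReal.ofReal (c ^ σ) * F (t x) := by
    rintro x ⟨hxΩ, hx⟩
    have htx : 0 < t x := (hΩU x (hrU (ball_subset_ball (by linarith) hx))).1 hxΩ
    have htxD : t x ≤ c * r := by
      have htp : t p ≤ 0 := not_lt.1 fun h => hp ((hΩU p (hrU (mem_ball_self (by positivity)))).2 h)
      have := ht.le_add_mul x p
      push_cast at this
      nlinarith [mem_ball.1 hx]
    have hd := div_le_infDist_compl_of_lipschitzWith (⟨p, hp⟩ : Ωᶜ.Nonempty) ht hΩU hrU hx htxD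
    simp only [F, indicator_of_mem (show t x ∈ Ioc 0 (c * r) from ⟨htx, htxD⟩)]
    push_cast at hd
    rw [← ENNReal.ofReal_mul (by positivity)]
    refine ENNReal.ofReal_le_ofReal ?_
    calc infDist x Ωᶜ ^ (-σ) ≤ (t x / c) ^ (-σ) :=
          Real.rpow_le_rpow_of_nonpos (div_pos htx hc) hd (neg_nonpos.2 hσ0)
      _ = c ^ σ * t x ^ (-σ) := by
          rw [Real.div_rpow htx.le hc.le, Real.rpow_neg hc.le, div_inv_eq_mul, mul_comm]
  have hF : Measurable F := Measurable.indicator (by fun_prop) measurableSet_Ioc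
  have hFt : ∫⁻ x in ball p r, F (t x) < ⊤ := by
    refine setLIntegral_ball_comp_chart_lt_top e hγ.continuous.measurable hγdep hF ?_ p r
    rw [lintegral_indicator measurableSet_Ioc]
    exact lintegral_Ioc_rpow_neg_lt_top hσ1 (by positivity)
  calc ∫⁻ x in Ω ∩ ball p r, ENNReal.ofReal (infDist x Ωᶜ ^ (-σ))
      ≤ ∫⁻ x in Ω ∩ ball p r, ENNReal.ofReal (c ^ σ) * F (t x) :=
        setLIntegral_mono' (hΩ.inter measurableSet_ball) hbound
    _ ≤ ENNReal.ofReal (c ^ σ) * ∫⁻ x in ball p r, F (t x) := by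
        rw [lintegral_const_mul' _ _ ofReal_ne_top]
        gcongr
        exact inter_subset_right
    _ < ⊤ := mul_lt_top ofReal_lt_top hFt

theorem HasLipschitzBoundary.exists_nhds_setLIntegral_infDist_compl_rpow_neg_lt_top {N : ℕ}
    {Ω : Set (Euc N)} (hΩl : HasLipschitzBoundary N Ω) (hΩo : IsOpen Ω) {σ : ℝ} (hσ0 : 0 ≤ σ)
    (hσ1 : σ < 1) {p : Euc N} (hp : p ∈ frontier Ω) :
    ∃ V ∈ 𝓝 p, ∫⁻ x in Ω ∩ V, ENNReal.ofReal (infDist x Ωᶜ ^ (-σ)) < ⊤ := by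
  obtain ⟨U, hU, e, γ, L, hγ, hdep, hchart⟩ := hΩl p hp
  have hpΩ : p ∉ Ω := by rw [hΩo.frontier_eq] at hp; exact hp.2
  obtain ⟨n, rfl⟩ : ∃ n, N = n + 1 := by
    refine Nat.exists_eq_add_one_of_ne_zero fun hN => hpΩ ?_
    subst hN
    -- in dimension `0` the chart condition is vacuous, so the chart says `U ⊆ Ω`
    exact (hchart.symm ▸ ⟨mem_of_mem_nhds hU, fun i => i.elim0⟩ : p ∈ Ω ∩ U).1
  obtain ⟨r, hr, hrU⟩ : ∃ r > 0, ball p (2 * r) ⊆ U := by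
    obtain ⟨ε, hε, hεU⟩ := Metric.mem_nhds_iff.1 hU
    exact ⟨ε / 2, by positivity, by rwa [mul_div_cancel₀ _ two_ne_zero]⟩
  exact ⟨ball p r, ball_mem_nhds p hr,
    setLIntegral_inter_ball_infDist_compl_rpow_neg_lt_top hσ0 hσ1 hΩo.measurableSet hγ
      (fun z w h => hdep z w fun i hi => h ⟨i, by omega⟩)
      (fun y hy => mem_iff_pos_of_chart hchart hy) hpΩ hr hrU⟩

theorem exists_nhds_setLIntegral_infDist_compl_rpow_neg_lt_top_of_mem {N : ℕ} {σ : ℝ}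
    (hσ0 : 0 ≤ σ) {Ω : Set (Euc N)} (hΩo : IsOpen Ω) (hne : Ωᶜ.Nonempty) {x : Euc N}
    (hx : x ∈ Ω) :
    ∃ V ∈ 𝓝 x, ∫⁻ y in Ω ∩ V, ENNReal.ofReal (infDist y Ωᶜ ^ (-σ)) < ⊤ := by
  have hd : 0 < infDist x Ωᶜ :=
    (hΩo.isClosed_compl.notMem_iff_infDist_pos hne).1 (not_not.2 hx)
  refine ⟨ball x (infDist x Ωᶜ / 2), ball_mem_nhds x (half_pos hd), ?_⟩
  refine setLIntegral_lt_top_of_le_nnreal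
    ((measure_mono inter_subset_right).trans_lt measure_ball_lt_top).ne
    ⟨((infDist x Ωᶜ / 2) ^ (-σ)).toNNReal, fun y hy => ENNReal.ofReal_le_ofReal ?_⟩
  have hxy := infDist_le_infDist_add_dist (x := x) (y := y) (s := Ωᶜ)
  rw [dist_comm] at hxy
  refine Real.rpow_le_rpow_of_nonpos (half_pos hd) ?_ (neg_nonpos.2 hσ0)
  linarith [mem_ball.1 hy.2]

theorem setLIntegral_lt_top_of_isCompact {X : Type*} [TopologicalSpace X] [MeasurableSpace X]
    {μ : Measure X} [SFinite μ] {K s : Set X} (hK : IsCompact K) (hs : MeasurableSet s)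
    (hsK : s ⊆ K) {f : X → ℝ≥0∞} (hf : ∀ x ∈ K, ∃ V ∈ 𝓝 x, ∫⁻ y in s ∩ V, f y ∂μ < ⊤) :
    ∫⁻ y in s, f y ∂μ < ⊤ := by
  have hν : ∀ V, (μ.restrict s).withDensity f V = ∫⁻ y in s ∩ V, f y ∂μ := fun V => by
    rw [withDensity_apply', Measure.restrict_restrict' hs, inter_comm]
  have hK' : (μ.restrict s).withDensity f K < ⊤ :=
    hK.measure_lt_top_of_nhdsWithin fun x hx => by
      obtain ⟨V, hV, hfV⟩ := hf x hx
      exact ⟨V, mem_nhdsWithin_of_mem_nhds hV, by rwa [hν]⟩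
  calc ∫⁻ y in s, f y ∂μ = (μ.restrict s).withDensity f s := by rw [hν, inter_self]
    _ ≤ (μ.restrict s).withDensity f K := measure_mono hsK
    _ < ⊤ := hK'

theorem setLIntegral_infDist_compl_rpow_neg_lt_top {N : ℕ} {σ : ℝ} (hσ0 : 0 ≤ σ) (hσ1 : σ < 1)
    {Ω : Set (Euc N)} (hΩo : IsOpen Ω) (hΩb : Bornology.IsBounded Ω)
    (hΩl : HasLipschitzBoundary N Ω) (hne : Ωᶜ.Nonempty) :
    ∫⁻ x in Ω, ENNReal.ofReal (infDist x Ωᶜ ^ (-σ)) < ⊤ := by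
  refine setLIntegral_lt_top_of_isCompact hΩb.isCompact_closure hΩo.measurableSet subset_closure
    fun x hx => ?_
  rcases (closure_eq_self_union_frontier Ω ▸ hx : x ∈ Ω ∪ frontier Ω) with hxΩ | hxΩ
  · exact exists_nhds_setLIntegral_infDist_compl_rpow_neg_lt_top_of_mem hσ0 hΩo hne hxΩ
  · exact hΩl.exists_nhds_setLIntegral_infDist_compl_rpow_neg_lt_top hΩo hσ0 hσ1 hxΩ

theorem setLIntegral_kappa_lt_top {N : ℕ} {σ : ℝ} (hσ0 : 0 ≤ σ) (hσ1 : σ < 1)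
    {k : Euc N → Euc N → ℝ} (hk : ∀ x y, 0 ≤ k x y) {C : ℝ}
    (hC : ∀ x, ∫⁻ y, ENNReal.ofReal (min 1 (‖x - y‖ ^ σ) * k x y) ≤ ENNReal.ofReal C)
    {Ω : Set (Euc N)} (hΩo : IsOpen Ω) (hΩb : Bornology.IsBounded Ω)
    (hΩl : HasLipschitzBoundary N Ω) :
    ∫⁻ x in Ω, kappa k Ω x < ⊤ := by
  rcases Ωᶜ.eq_empty_or_nonempty with hempty | hne
  · simp [kappa, hempty]
  have hbound : ∀ x ∈ Ω,
      kappa k Ω x ≤ ENNReal.ofReal C * (1 + ENNReal.ofReal (infDist x Ωᶜ ^ (-σ))) := by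
    intro x hx
    have hd : 0 < infDist x Ωᶜ :=
      (hΩo.isClosed_compl.notMem_iff_infDist_pos hne).1 (not_not.2 hx)
    refine (kappa_le_one_add_infDist_rpow_neg_mul hσ0 hk hΩo.measurableSet hd).trans ?_
    rw [mul_comm, ENNReal.ofReal_add zero_le_one (by positivity), ENNReal.ofReal_one]
    gcongr
    exact hC x
  calc ∫⁻ x in Ω, kappa k Ω x
      ≤ ∫⁻ x in Ω, ENNReal.ofReal C * (1 + ENNReal.ofReal (infDist x Ωᶜ ^ (-σ))) :=
        setLIntegral_mono' hΩo.measurableSet hbound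
    _ = ENNReal.ofReal C * (volume Ω + ∫⁻ x in Ω, ENNReal.ofReal (infDist x Ωᶜ ^ (-σ))) := by
        rw [lintegral_const_mul' _ _ ofReal_ne_top, lintegral_add_left measurable_const,
          setLIntegral_one]
    _ < ⊤ := mul_lt_top ofReal_lt_top (add_lt_top.2 ⟨hΩb.measure_lt_top,
        setLIntegral_infDist_compl_rpow_neg_lt_top hσ0 hσ1 hΩo hΩb hΩl hne⟩)

theorem indicator_mem_Dk_general
    {N : ℕ} {σ : ℝ} (hσ0 : 0 < σ) (hσ1 : σ < 1)
    (k : Euc N → Euc N → ℝ) (hk : IsKernel N σ k)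
    (Ω : Set (Euc N)) (hΩo : IsOpen Ω) (hΩb : Bornology.IsBounded Ω)
    (hΩl : HasLipschitzBoundary N Ω) :
    MemLp (Set.indicator Ω (fun _ => (1:ℝ))) 2 volume ∧
    quadForm k Set.univ (Set.indicator Ω (fun _ => (1:ℝ))) < ⊤ ∧
    (∫⁻ x in Ω, kappa k Ω x) < ⊤ := by
  obtain ⟨hkm, hk0, hksymm, C, hC⟩ := hk
  have hκ := setLIntegral_kappa_lt_top hσ0.le hσ1 hk0 hC hΩo hΩb hΩl
  refine ⟨memLp_indicator_const 2 hΩo.measurableSet 1 (Or.inr hΩb.measure_lt_top.ne), ?_, hκ⟩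
  rwa [quadForm_univ_indicator_one hkm hksymm hΩo.measurableSet]

/-- the indicator function of a bounded Lipschitz set belongs to `D^k(ℝ^N)`. -/
theorem indicator_mem_Dk
    {N : ℕ} (hN : 0 < N) {σ : ℝ} (hσ0 : 0 < σ) (hσ1 : σ < 1)
    (k : Euc N → Euc N → ℝ) (hk : IsKernel N σ k)
    (Ω : Set (Euc N)) (hΩo : IsOpen Ω) (hΩb : Bornology.IsBounded Ω)
    (hΩl : HasLipschitzBoundary N Ω) :
    MemLp (Set.indicator Ω (fun _ => (1:ℝ))) 2 volume ∧
    quadForm k Set.univ (Set.indicator Ω (fun _ => (1:ℝ))) < ⊤ ∧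
    (∫⁻ x in Ω, kappa k Ω x) < ⊤ :=
  indicator_mem_Dk_general hσ0 hσ1 k hk Ω hΩo hΩb hΩl
end
end

section
/- Let σ ∈ (0,2] and let k be a kernel of order σ. Let u ∈ D^k(ℝ^N). Then there exists a sequence (u_n) in D^k(ℝ^N) such that each u_n vanishes outside some bounded set, and u_n → u in D^k(ℝ^N), i.e. ‖u−u_n‖_{L²(ℝ^N)} → 0 and b_k(u−u_n) → 0 as n → ∞. Moreover, if u ≥ 0 a.e., then (u_n) can be chosen so that in addition 0 ≤ u_n ≤ u_{n+1} ≤ u almost everywhere for all n. -/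
/-!
Truncate with the 1-Lipschitz radial cutoffs `χₙ(x) = clamp(n + 1 - ‖x‖)` to `[0, 1]`:
`uₙ = χₙ u`. For every 1-Lipschitz `φ` with values in `[0, 1]`, writing `φ(x)u(x) - φ(y)u(y)` as
`φ(y)(u(x) - u(y)) + u(x)(φ(x) - φ(y))` and using `(φ(x) - φ(y))² ≤ min(1, |x - y|)² ≤
min(1, |x - y|^σ)` (this is where `σ ≤ 2` enters) gives
`(φ(x)u(x) - φ(y)u(y))² k(x,y) ≤ 2 (u(x) - u(y))² k(x,y) + 2 u(x)² min(1, |x - y|^σ) k(x,y)`.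
The right-hand side is integrable on `ℝᴺ × ℝᴺ` because `b_k(u) < ∞`, `u ∈ L²` and `k` has
order `σ`. Applied to `φ = 1 - χₙ → 0`, dominated convergence gives `b_k(u - uₙ) → 0`, and
likewise `‖u - uₙ‖_{L²} → 0`. Since `χₙ ≤ χₙ₊₁ ≤ 1`, the `uₙ` increase to `u` when `u ≥ 0`.
-/

open MeasureTheory ENNReal Metric Set Filter

noncomputable section

lemma LipschitzWith.const_sub {E : Type*} [PseudoEMetricSpace E] {K : NNReal} {φ : E → ℝ}
    (hφ : LipschitzWith K φ) (c : ℝ) : LipschitzWith K (fun x => c - φ x) := by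
  simpa [Function.comp_def] using (IsometryEquiv.subLeft c).isometry.lipschitz.comp hφ

lemma LipschitzWith.abs_sub_le_min_one {E : Type*} [PseudoMetricSpace E] {φ : E → ℝ}
    (hφ : LipschitzWith 1 φ) (hφ01 : ∀ x, φ x ∈ Icc (0 : ℝ) 1) (x y : E) :
    |φ x - φ y| ≤ min 1 (dist x y) := by
  refine le_min (abs_sub_le_iff.2 ⟨?_, ?_⟩) ?_
  · linarith [(hφ01 x).2, (hφ01 y).1]
  · linarith [(hφ01 x).1, (hφ01 y).2]
  · simpa [Real.dist_eq] using hφ.dist_le_mul x y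

section Cutoff

variable {E : Type*} [SeminormedAddCommGroup E]

def radialCutoff (n : ℕ) (x : E) : ℝ := max 0 (min 1 ((n : ℝ) + 1 - ‖x‖))

lemma radialCutoff_mem_Icc (n : ℕ) (x : E) : radialCutoff n x ∈ Icc (0 : ℝ) 1 :=
  ⟨le_max_left _ _, max_le zero_le_one (min_le_left _ _)⟩

lemma lipschitzWith_radialCutoff (n : ℕ) : LipschitzWith 1 (radialCutoff n : E → ℝ) :=
  ((lipschitzWith_one_norm.const_sub _).const_min 1).const_max 0

lemma radialCutoff_le_succ (n : ℕ) (x : E) : radialCutoff n x ≤ radialCutoff (n + 1) x := by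
  unfold radialCutoff
  gcongr
  linarith

lemma radialCutoff_eq_one {n : ℕ} {x : E} (hx : ‖x‖ ≤ n) : radialCutoff n x = 1 := by
  unfold radialCutoff
  rw [min_eq_left (by linarith), max_eq_right zero_le_one]

lemma radialCutoff_eq_zero {n : ℕ} {x : E} (hx : (n : ℝ) + 1 ≤ ‖x‖) :
    radialCutoff n x = 0 := by
  unfold radialCutoff
  rw [min_eq_right (by linarith), max_eq_left (by linarith)]

lemma tendsto_radialCutoff (x : E) : Tendsto (fun n : ℕ => radialCutoff n x) atTop (nhds 1) :=
  tendsto_const_nhds.congr' <| eventually_atTop.2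
    ⟨⌈‖x‖⌉₊, fun _ hn =>
      (radialCutoff_eq_one ((Nat.le_ceil _).trans (by exact_mod_cast hn))).symm⟩

end Cutoff

lemma min_one_sq_le_min_one_rpow {σ m : ℝ} (hσ0 : 0 < σ) (hσ2 : σ ≤ 2) (hm : 0 ≤ m) :
    min 1 m ^ 2 ≤ min 1 (m ^ σ) := by
  rcases le_total m 1 with h | h
  · have hσm : m ^ (2 : ℝ) ≤ m ^ σ := Real.rpow_le_rpow_of_exponent_ge' hm h hσ0.le hσ2
    rw [min_eq_right h, min_eq_right (Real.rpow_le_one hm h hσ0.le)]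
    exact_mod_cast hσm
  · rw [min_eq_left h, min_eq_left (Real.one_le_rpow h hσ0.le), one_pow]

lemma norm_mul_le_of_mem_Icc {c : ℝ} (hc : c ∈ Icc (0 : ℝ) 1) (a : ℝ) :
    ‖c * a‖ ≤ ‖a‖ := by
  rw [norm_mul]
  exact mul_le_of_le_one_left (norm_nonneg a) ((abs_of_nonneg hc.1).trans_le hc.2)

lemma sq_mul_sub_mul_le {a b c d : ℝ} (hd : |d| ≤ 1) :
    (c * a - d * b) ^ 2 ≤ 2 * (a - b) ^ 2 + 2 * (a ^ 2 * (c - d) ^ 2) := by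
  have hd2 : d ^ 2 ≤ 1 := by nlinarith [abs_nonneg d, sq_abs d]
  nlinarith [sq_nonneg (d * (a - b) - a * (c - d)), sq_nonneg (a - b)]

lemma tendsto_eLpNorm_zero_of_dominated {α E F : Type*} [MeasurableSpace α] {μ : Measure α}
    [NormedAddCommGroup E] [NormedAddCommGroup F] {p : ℝ≥0∞} (hp0 : p ≠ 0) (hp : p ≠ ∞)
    {f : ℕ → α → E} {g : α → F} (hf : ∀ n, AEStronglyMeasurable (f n) μ)
    (hg : MemLp g p μ)
    (hfg : ∀ n, ∀ᵐ x ∂μ, ‖f n x‖ ≤ ‖g x‖)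
    (hlim : ∀ᵐ x ∂μ, Tendsto (fun n => f n x) atTop (nhds 0)) :
    Tendsto (fun n => eLpNorm (f n) p μ) atTop (nhds 0) := by
  have hp_pos : 0 < p.toReal := ENNReal.toReal_pos hp0 hp
  simp_rw [eLpNorm_eq_lintegral_rpow_enorm_toReal hp0 hp]
  have hint : Tendsto (fun n => ∫⁻ x, ‖f n x‖ₑ ^ p.toReal ∂μ) atTop (nhds 0) := by
    have := tendsto_lintegral_of_dominated_convergence' (f := 0) (fun x => ‖g x‖ₑ ^ p.toReal)
      (fun n => (hf n).enorm.pow_const _)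
      (fun n => (hfg n).mono fun x hx =>
        ENNReal.rpow_le_rpow (enorm_le_iff_norm_le.2 hx) hp_pos.le)
      (lintegral_rpow_enorm_lt_top_of_eLpNorm_lt_top hp0 hp hg.2).ne
      (hlim.mono fun x hx => ?_)
    · simpa using this
    · simpa [hp_pos] using ((continuous_enorm.tendsto 0).comp hx).ennrpow_const p.toReal
  simpa [hp_pos] using hint.ennrpow_const (1 / p.toReal)

section KernelForm

variable {N : ℕ} {σ : ℝ} {k : Euc N → Euc N → ℝ} {u : Euc N → ℝ}

lemma quadForm_univ_eq_lintegral_prod (hk : Measurable (fun p : Euc N × Euc N => k p.1 p.2))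
    (hu : Measurable u) :
    quadForm k univ u =
      2⁻¹ * ∫⁻ p, ENNReal.ofReal ((u p.1 - u p.2) ^ 2 * k p.1 p.2)
        ∂(volume.prod volume) := by
  rw [quadForm, Measure.restrict_univ, one_div, lintegral_prod _ (by fun_prop)]

def cutoffMajorant (k : Euc N → Euc N → ℝ) (σ : ℝ) (u : Euc N → ℝ)
    (p : Euc N × Euc N) : ℝ≥0∞ :=
  2 * ENNReal.ofReal ((u p.1 - u p.2) ^ 2 * k p.1 p.2) +
    2 * ENNReal.ofReal (u p.1 ^ 2 * (min 1 (‖p.1 - p.2‖ ^ σ) * k p.1 p.2))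

lemma ofReal_sq_mul_sub_mul_le_cutoffMajorant (hσ0 : 0 < σ) (hσ2 : σ ≤ 2)
    (hk : ∀ x y, 0 ≤ k x y) {φ : Euc N → ℝ} (hφ : LipschitzWith 1 φ)
    (hφ01 : ∀ x, φ x ∈ Icc (0 : ℝ) 1) (x y : Euc N) :
    ENNReal.ofReal ((φ x * u x - φ y * u y) ^ 2 * k x y) ≤ cutoffMajorant k σ u (x, y) := by
  have hφy : |φ y| ≤ 1 := (abs_of_nonneg (hφ01 y).1).trans_le (hφ01 y).2
  have hφxy : (φ x - φ y) ^ 2 ≤ min 1 (‖x - y‖ ^ σ) := by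
    calc (φ x - φ y) ^ 2 = |φ x - φ y| ^ 2 := (sq_abs _).symm
      _ ≤ min 1 (dist x y) ^ 2 := by gcongr; exact hφ.abs_sub_le_min_one hφ01 x y
      _ ≤ min 1 (‖x - y‖ ^ σ) := by
        rw [dist_eq_norm]; exact min_one_sq_le_min_one_rpow hσ0 hσ2 (norm_nonneg _)
  have hpoint : (φ x * u x - φ y * u y) ^ 2 * k x y ≤
      2 * ((u x - u y) ^ 2 * k x y) + 2 * (u x ^ 2 * (min 1 (‖x - y‖ ^ σ) * k x y)) := by
    calc (φ x * u x - φ y * u y) ^ 2 * k x y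
        ≤ (2 * (u x - u y) ^ 2 + 2 * (u x ^ 2 * (φ x - φ y) ^ 2)) * k x y :=
          mul_le_mul_of_nonneg_right (sq_mul_sub_mul_le hφy) (hk x y)
      _ ≤ (2 * (u x - u y) ^ 2 + 2 * (u x ^ 2 * min 1 (‖x - y‖ ^ σ))) * k x y := by
          gcongr; exact hk x y
      _ = _ := by ring
  calc ENNReal.ofReal ((φ x * u x - φ y * u y) ^ 2 * k x y)
      ≤ ENNReal.ofReal (2 * ((u x - u y) ^ 2 * k x y)) +
          ENNReal.ofReal (2 * (u x ^ 2 * (min 1 (‖x - y‖ ^ σ) * k x y))) :=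
        (ENNReal.ofReal_le_ofReal hpoint).trans ENNReal.ofReal_add_le
    _ = cutoffMajorant k σ u (x, y) := by
        simp only [cutoffMajorant, ENNReal.ofReal_mul zero_le_two, ENNReal.ofReal_ofNat]

lemma lintegral_sq_mul_min_rpow_mul_lt_top (hk : IsKernel N σ k) (hu : Measurable u)
    (hu2 : MemLp u 2 volume) :
    ∫⁻ p, ENNReal.ofReal (u p.1 ^ 2 * (min 1 (‖p.1 - p.2‖ ^ σ) * k p.1 p.2))
      ∂(volume.prod volume) < ⊤ := by
  obtain ⟨hkm, -, -, C, hC⟩ := hk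
  calc ∫⁻ p, ENNReal.ofReal (u p.1 ^ 2 * (min 1 (‖p.1 - p.2‖ ^ σ) * k p.1 p.2))
        ∂(volume.prod volume)
      = ∫⁻ x, ENNReal.ofReal (u x ^ 2) *
          ∫⁻ y, ENNReal.ofReal (min 1 (‖x - y‖ ^ σ) * k x y) := by
        rw [lintegral_prod _ (by fun_prop)]
        simp_rw [ENNReal.ofReal_mul (sq_nonneg _),
          lintegral_const_mul' _ _ ENNReal.ofReal_ne_top]
    _ ≤ ∫⁻ x, ENNReal.ofReal (u x ^ 2) * ENNReal.ofReal C := by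
        gcongr with x; exact hC x
    _ < ⊤ := by
        rw [lintegral_mul_const' _ _ ENNReal.ofReal_ne_top]
        exact ENNReal.mul_lt_top hu2.integrable_sq.lintegral_lt_top ENNReal.ofReal_lt_top

lemma lintegral_cutoffMajorant_lt_top (hk : IsKernel N σ k) (hu : Measurable u)
    (hu2 : MemLp u 2 volume) (huq : quadForm k univ u < ⊤) :
    ∫⁻ p, cutoffMajorant k σ u p ∂(volume.prod volume) < ⊤ := by
  have hkm := hk.1
  have hquad :
      ∫⁻ p, ENNReal.ofReal ((u p.1 - u p.2) ^ 2 * k p.1 p.2) ∂(volume.prod volume) < ⊤ := by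
    rw [← ENNReal.mul_lt_mul_iff_right (a := 2⁻¹) (by simp) (by simp),
      ← quadForm_univ_eq_lintegral_prod hkm hu]
    simpa using huq
  unfold cutoffMajorant
  rw [lintegral_add_left (by fun_prop), lintegral_const_mul _ (by fun_prop),
    lintegral_const_mul _ (by fun_prop)]
  exact ENNReal.add_lt_top.2 ⟨ENNReal.mul_lt_top (by simp) hquad,
    ENNReal.mul_lt_top (by simp) (lintegral_sq_mul_min_rpow_mul_lt_top hk hu hu2)⟩

lemma quadForm_mul_lt_top (hσ0 : 0 < σ) (hσ2 : σ ≤ 2) (hk : IsKernel N σ k)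
    (hu : Measurable u) (hu2 : MemLp u 2 volume) (huq : quadForm k univ u < ⊤)
    {φ : Euc N → ℝ} (hφ : LipschitzWith 1 φ) (hφ01 : ∀ x, φ x ∈ Icc (0 : ℝ) 1) :
    quadForm k univ (fun x => φ x * u x) < ⊤ := by
  rw [quadForm_univ_eq_lintegral_prod (u := fun x => φ x * u x) hk.1
    (hφ.continuous.measurable.mul hu)]
  refine ENNReal.mul_lt_top (by simp) ((lintegral_mono fun p => ?_).trans_lt
    (lintegral_cutoffMajorant_lt_top hk hu hu2 huq))
  exact ofReal_sq_mul_sub_mul_le_cutoffMajorant hσ0 hσ2 hk.2.1 hφ hφ01 p.1 p.2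

lemma tendsto_quadForm_mul (hσ0 : 0 < σ) (hσ2 : σ ≤ 2) (hk : IsKernel N σ k)
    (hu : Measurable u) (hu2 : MemLp u 2 volume) (huq : quadForm k univ u < ⊤)
    {φ : ℕ → Euc N → ℝ} (hφ : ∀ n, LipschitzWith 1 (φ n))
    (hφ01 : ∀ n x, φ n x ∈ Icc (0 : ℝ) 1)
    (hlim : ∀ x, Tendsto (fun n => φ n x) atTop (nhds 0)) :
    Tendsto (fun n => quadForm k univ (fun x => φ n x * u x)) atTop (nhds 0) := by
  have hkm := hk.1
  have hint := tendsto_lintegral_of_dominated_convergence (f := 0) (cutoffMajorant k σ u)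
    (fun n => by have := (hφ n).continuous.measurable; fun_prop)
    (fun n => ae_of_all _ fun p =>
      ofReal_sq_mul_sub_mul_le_cutoffMajorant hσ0 hσ2 hk.2.1 (hφ n) (hφ01 n) p.1 p.2)
    (lintegral_cutoffMajorant_lt_top hk hu hu2 huq).ne
    (ae_of_all _ fun p => ?_)
  · convert ENNReal.Tendsto.const_mul hint (Or.inr (by simp : (2⁻¹ : ℝ≥0∞) ≠ ⊤))
      using 1
    · exact funext fun n =>
        quadForm_univ_eq_lintegral_prod hkm ((hφ n).continuous.measurable.mul hu)
    · simp
  · simpa using ENNReal.tendsto_ofReal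
      ((((hlim p.1).mul_const _).sub ((hlim p.2).mul_const _)).pow 2 |>.mul_const _)

lemma radialCutoff_mul_finite_energy_bounded_support (hσ0 : 0 < σ) (hσ2 : σ ≤ 2)
    (hk : IsKernel N σ k) (hu : Measurable u) (hu2 : MemLp u 2 volume)
    (huq : quadForm k univ u < ⊤) (n : ℕ) :
    Measurable (fun x => radialCutoff n x * u x) ∧
      MemLp (fun x => radialCutoff n x * u x) 2 volume ∧
      quadForm k univ (fun x => radialCutoff n x * u x) < ⊤ ∧
      ∃ s : Set (Euc N), Bornology.IsBounded s ∧ ∀ x ∉ s, radialCutoff n x * u x = 0 := by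
  have hmeas := (lipschitzWith_radialCutoff n).continuous.measurable.mul hu
  refine ⟨hmeas, hu2.of_le hmeas.aestronglyMeasurable (ae_of_all _ fun x => ?_),
    quadForm_mul_lt_top hσ0 hσ2 hk hu hu2 huq (lipschitzWith_radialCutoff n)
      (radialCutoff_mem_Icc n), closedBall 0 ((n : ℝ) + 1), isBounded_closedBall,
    fun x hx => ?_⟩
  · exact norm_mul_le_of_mem_Icc (radialCutoff_mem_Icc n x) (u x)
  · rw [mem_closedBall, dist_zero_right, not_le] at hx
    rw [radialCutoff_eq_zero hx.le, zero_mul]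

lemma tendsto_sub_radialCutoff_mul (hσ0 : 0 < σ) (hσ2 : σ ≤ 2) (hk : IsKernel N σ k)
    (hu : Measurable u) (hu2 : MemLp u 2 volume) (huq : quadForm k univ u < ⊤) :
    Tendsto (fun n : ℕ => eLpNorm (fun x => u x - radialCutoff n x * u x) 2 volume)
        atTop (nhds 0) ∧
      Tendsto (fun n : ℕ => quadForm k univ (fun x => u x - radialCutoff n x * u x))
        atTop (nhds 0) := by
  have hsub : ∀ n : ℕ, (fun x => u x - radialCutoff n x * u x) =
      fun x => (1 - radialCutoff n x) * u x := fun n => funext fun x => by ring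
  have hφ : ∀ n : ℕ, LipschitzWith 1 (fun x : Euc N => 1 - radialCutoff n x) :=
    fun n => (lipschitzWith_radialCutoff n).const_sub 1
  have hφ01 : ∀ (n : ℕ) (x : Euc N), 1 - radialCutoff n x ∈ Icc (0 : ℝ) 1 :=
    fun n x => Icc.mem_iff_one_sub_mem.1 (radialCutoff_mem_Icc n x)
  have hlim : ∀ x : Euc N, Tendsto (fun n : ℕ => 1 - radialCutoff n x) atTop (nhds 0) :=
    fun x => by simpa using (tendsto_radialCutoff x).const_sub 1
  simp_rw [hsub]
  refine ⟨tendsto_eLpNorm_zero_of_dominated two_ne_zero ENNReal.ofNat_ne_top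
    (fun n => ((hφ n).continuous.measurable.mul hu).aestronglyMeasurable) hu2
    (fun n => ae_of_all _ fun x => ?_) (ae_of_all _ fun x => ?_),
    tendsto_quadForm_mul hσ0 hσ2 hk hu hu2 huq hφ hφ01 hlim⟩
  · exact norm_mul_le_of_mem_Icc (hφ01 n x) (u x)
  · simpa using (hlim x).mul_const (u x)

end KernelForm

theorem approx_by_compactly_supported_general
    {N : ℕ} {σ : ℝ} (hσ0 : 0 < σ) (hσ2 : σ ≤ 2)
    (k : Euc N → Euc N → ℝ) (hk : IsKernel N σ k)
    (u : Euc N → ℝ) (hum : Measurable u) (huL2 : MemLp u 2 volume)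
    (huq : quadForm k Set.univ u < ⊤) :
    (∃ un : ℕ → Euc N → ℝ,
      (∀ n, Measurable (un n) ∧ MemLp (un n) 2 volume ∧ quadForm k Set.univ (un n) < ⊤ ∧
        ∃ s : Set (Euc N), Bornology.IsBounded s ∧ ∀ x ∉ s, un n x = 0) ∧
      Filter.Tendsto (fun n => eLpNorm (fun x => u x - un n x) 2 volume)
        Filter.atTop (nhds 0) ∧
      Filter.Tendsto (fun n => quadForm k Set.univ (fun x => u x - un n x))
        Filter.atTop (nhds 0)) ∧
    ((∀ᵐ x ∂(volume : Measure (Euc N)), 0 ≤ u x) →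
      ∃ un : ℕ → Euc N → ℝ,
        (∀ n, Measurable (un n) ∧ MemLp (un n) 2 volume ∧ quadForm k Set.univ (un n) < ⊤ ∧
          ∃ s : Set (Euc N), Bornology.IsBounded s ∧ ∀ x ∉ s, un n x = 0) ∧
        (∀ n, ∀ᵐ x ∂(volume : Measure (Euc N)),
          0 ≤ un n x ∧ un n x ≤ un (n + 1) x ∧ un n x ≤ u x) ∧
        Filter.Tendsto (fun n => eLpNorm (fun x => u x - un n x) 2 volume)
          Filter.atTop (nhds 0) ∧
        Filter.Tendsto (fun n => quadForm k Set.univ (fun x => u x - un n x))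
          Filter.atTop (nhds 0)) := by
  have hmem := radialCutoff_mul_finite_energy_bounded_support hσ0 hσ2 hk hum huL2 huq
  obtain ⟨hL2, hquad⟩ := tendsto_sub_radialCutoff_mul hσ0 hσ2 hk hum huL2 huq
  refine ⟨⟨_, hmem, hL2, hquad⟩, fun hpos => ⟨_, hmem, fun n => ?_, hL2, hquad⟩⟩
  filter_upwards [hpos] with x hx
  have h01 := radialCutoff_mem_Icc n x
  exact ⟨mul_nonneg h01.1 hx, mul_le_mul_of_nonneg_right (radialCutoff_le_succ n x) hx,
    mul_le_of_le_one_left hx h01.2⟩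

/-- approximation in `D^k(ℝ^N)` by functions vanishing outside bounded sets. -/
theorem approx_by_compactly_supported
    {N : ℕ} (hN : 0 < N) {σ : ℝ} (hσ0 : 0 < σ) (hσ2 : σ ≤ 2)
    (k : Euc N → Euc N → ℝ) (hk : IsKernel N σ k)
    (u : Euc N → ℝ) (hum : Measurable u) (huL2 : MemLp u 2 volume)
    (huq : quadForm k Set.univ u < ⊤) :
    (∃ un : ℕ → Euc N → ℝ,
      (∀ n, Measurable (un n) ∧ MemLp (un n) 2 volume ∧ quadForm k Set.univ (un n) < ⊤ ∧
        ∃ s : Set (Euc N), Bornology.IsBounded s ∧ ∀ x ∉ s, un n x = 0) ∧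
      Filter.Tendsto (fun n => eLpNorm (fun x => u x - un n x) 2 volume)
        Filter.atTop (nhds 0) ∧
      Filter.Tendsto (fun n => quadForm k Set.univ (fun x => u x - un n x))
        Filter.atTop (nhds 0)) ∧
    ((∀ᵐ x ∂(volume : Measure (Euc N)), 0 ≤ u x) →
      ∃ un : ℕ → Euc N → ℝ,
        (∀ n, Measurable (un n) ∧ MemLp (un n) 2 volume ∧ quadForm k Set.univ (un n) < ⊤ ∧
          ∃ s : Set (Euc N), Bornology.IsBounded s ∧ ∀ x ∉ s, un n x = 0) ∧
        (∀ n, ∀ᵐ x ∂(volume : Measure (Euc N)),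
          0 ≤ un n x ∧ un n x ≤ un (n + 1) x ∧ un n x ≤ u x) ∧
        Filter.Tendsto (fun n => eLpNorm (fun x => u x - un n x) 2 volume)
          Filter.atTop (nhds 0) ∧
        Filter.Tendsto (fun n => quadForm k Set.univ (fun x => u x - un n x))
          Filter.atTop (nhds 0)) :=
  approx_by_compactly_supported_general hσ0 hσ2 k hk u hum huL2 huq
end
end
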